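/- arXiv:1205.1120 — 6 statements merged into one kernel-verified Lean document; each statement's English description precedes it below -/
import Mathlib

section
/- Let G be a finite group, R a commutative ring, F a family of subgroups of G closed under conjugation and under taking subgroups, and let X be a G-set such that the fixed-point set X^H is nonempty if and only if H ∈ F. Then a short exact sequence 0 → A → B → C → 0 of RG-modules is F-split if and only if the sequence 0 → A ⊗_R RX → B ⊗_R RX → C ⊗_R RX → 0 (with diagonal G-action on the tensor products, RX the permutation module on X) splits as a sequence of RG-modules. -/
/-!
If `p` splits over every point stabilizer `G_x`, transporting the section chosen at an orbit
representative along the orbit gives a family of sections `σ_x` with `σ_{gx} ∘ g = g ∘ σ_x`, and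
then `c ⊗ x ↦ σ_x c ⊗ x` is a `G`-equivariant section of `p ⊗ RX`. Conversely, if `s` is such a
section and `H` fixes `x`, reading off the `x`-coefficient of `s (c ⊗ x)` is an `H`-equivariant
section of `p`.
-/

open CategoryTheory MonoidalCategory

/-- A surjection `π : B → C` of `RG`-modules (`R`-linear `G`-representations) is
`H`-split if, after restriction to `H`, the corresponding short exact sequence splits,
i.e. `π` admits an `RH`-linear section: an `R`-linear section commuting with the
action of every `h ∈ H`. -/
def IsHSplitSurj (R : Type) [CommRing R] (G : Type) [Group G] (H : Subgroup G)
    {B C : Rep R G} (π : B ⟶ C) : Prop :=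
  ∃ s : C.V →ₗ[R] B.V, (∀ c, π.hom (s c) = c) ∧
    ∀ h ∈ H, ∀ c, s (C.ρ h c) = B.ρ h (s c)

open TensorProduct

theorem MulAction.exists_equivariant_of_forall_stabilizer_fixed {G X Y : Type*} [Group G]
    [MulAction G X] [MulAction G Y] (S : Set Y) (hS : ∀ g : G, ∀ y ∈ S, g • y ∈ S)
    (h : ∀ x : X, ∃ y ∈ S, ∀ g ∈ stabilizer G x, g • y = y) :
    ∃ f : X → Y, (∀ x, f x ∈ S) ∧ ∀ (g : G) (x : X), f (g • x) = g • f x := by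
  choose y hyS hy using h
  let rep (x : X) : X := (Quotient.mk (orbitRel G X) x).out
  have rep_smul (g : G) (x : X) : rep (g • x) = rep x :=
    congrArg Quotient.out (Quotient.sound (mem_orbit x g))
  have exists_smul_rep (x : X) : ∃ g : G, g • rep x = x := by
    obtain ⟨g, hg⟩ := Quotient.mk_out (s := orbitRel G X) x
    exact ⟨g⁻¹, by simp only [rep, ← hg, inv_smul_smul]⟩
  choose a ha using exists_smul_rep
  refine ⟨fun x => a x • y (rep x), fun x => hS _ _ (hyS _), fun g x => ?_⟩
  have hk : (a (g • x))⁻¹ * g * a x ∈ stabilizer G (rep x) := by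
    rw [mem_stabilizer_iff, mul_smul, mul_smul, ha, inv_smul_eq_iff, ← rep_smul g x, ha]
  simp only [rep_smul]
  calc a (g • x) • y (rep x)
      = a (g • x) • ((a (g • x))⁻¹ * g * a x) • y (rep x) := by rw [hy _ _ hk]
    _ = g • a x • y (rep x) := by rw [smul_smul, smul_smul]; group

section PermutationModule

variable {R X M N : Type*} [CommSemiring R] [DecidableEq X]
  [AddCommMonoid M] [Module R M] [AddCommMonoid N] [Module R N]

variable (R X M) in
noncomputable def monoidAlgebraScalarRight : M ⊗[R] MonoidAlgebra R X ≃ₗ[R] (X →₀ M) :=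
  (LinearEquiv.lTensor M (MonoidAlgebra.coeffLinearEquiv R)).trans (finsuppScalarRight R R M X)

@[simp]
lemma monoidAlgebraScalarRight_tmul_apply (m : M) (f : MonoidAlgebra R X) (x : X) :
    monoidAlgebraScalarRight R X M (m ⊗ₜ f) x = f.coeff x • m := by
  simp [monoidAlgebraScalarRight]

@[simp]
lemma monoidAlgebraScalarRight_tmul_single (m : M) (x : X) (r : R) :
    monoidAlgebraScalarRight R X M (m ⊗ₜ MonoidAlgebra.single x r) = Finsupp.single x (r • m) := by
  ext y
  simp [MonoidAlgebra.coeff_single, Finsupp.single_apply, apply_ite (· • m)]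

noncomputable def rTensorFamily (σ : X → M →ₗ[R] N) :
    M ⊗[R] MonoidAlgebra R X →ₗ[R] N ⊗[R] MonoidAlgebra R X :=
  (monoidAlgebraScalarRight R X N).symm.toLinearMap ∘ₗ
    Finsupp.lsum R (fun x => Finsupp.lsingle x ∘ₗ σ x) ∘ₗ
    (monoidAlgebraScalarRight R X M).toLinearMap

@[simp]
lemma rTensorFamily_tmul_single (σ : X → M →ₗ[R] N) (m : M) (x : X) :
    rTensorFamily σ (m ⊗ₜ MonoidAlgebra.single x 1) = σ x m ⊗ₜ MonoidAlgebra.single x 1 := by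
  simp [rTensorFamily, LinearEquiv.symm_apply_eq]

variable (x : X) in
noncomputable def lcoeffTensor : M ⊗[R] MonoidAlgebra R X →ₗ[R] M :=
  Finsupp.lapply x ∘ₗ (monoidAlgebraScalarRight R X M).toLinearMap

@[simp]
lemma lcoeffTensor_tmul (x : X) (m : M) (f : MonoidAlgebra R X) :
    lcoeffTensor x (m ⊗ₜ f) = f.coeff x • m := by
  simp [lcoeffTensor]

lemma rTensor_comp_rTensorFamily (φ : N →ₗ[R] M) (σ : X → M →ₗ[R] N)
    (h : ∀ x, φ ∘ₗ σ x = LinearMap.id) :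
    φ.rTensor (MonoidAlgebra R X) ∘ₗ rTensorFamily σ = LinearMap.id := by
  ext m x
  simpa using congrArg (· ⊗ₜ MonoidAlgebra.single x (1 : R)) (LinearMap.congr_fun (h x) m)

lemma lcoeffTensor_comp_rTensor (x : X) (φ : M →ₗ[R] N) :
    lcoeffTensor x ∘ₗ φ.rTensor (MonoidAlgebra R X) = φ ∘ₗ lcoeffTensor x := by
  ext m y
  simp

variable {G : Type*}

lemma rTensorFamily_comp_map_ofMulAction [Monoid G] [MulAction G X] (σ : X → M →ₗ[R] N)
    (g : G) (e : M →ₗ[R] M) (e' : N →ₗ[R] N) (h : ∀ x, σ (g • x) ∘ₗ e = e' ∘ₗ σ x) :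
    rTensorFamily σ ∘ₗ map e (Representation.ofMulAction R G X g) =
      map e' (Representation.ofMulAction R G X g) ∘ₗ rTensorFamily σ := by
  ext m x
  simpa using congrArg (· ⊗ₜ MonoidAlgebra.single (g • x) (1 : R)) (LinearMap.congr_fun (h x) m)

lemma lcoeffTensor_comp_map_ofMulAction [Group G] [MulAction G X] {x : X} {g : G}
    (hg : g • x = x) (e : M →ₗ[R] M) :
    lcoeffTensor x ∘ₗ map e (Representation.ofMulAction R G X g) = e ∘ₗ lcoeffTensor x := by
  have hg' : g⁻¹ • x = x := by rw [inv_smul_eq_iff, hg]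
  ext m y
  simp [Finsupp.single_apply, ← eq_inv_smul_iff, hg', apply_ite e]

end PermutationModule

section RepSplitting

variable {R G : Type} [CommRing R] [Group G] {B C : Rep R G} {p : B ⟶ C}

lemma exists_equivariant_sections_of_forall_stabilizer {X : Type*} [MulAction G X]
    (h : ∀ x : X, IsHSplitSurj R G (MulAction.stabilizer G x) p) :
    ∃ σ : X → (C.V →ₗ[R] B.V), (∀ x, p.hom.toLinearMap ∘ₗ σ x = LinearMap.id) ∧
      ∀ (g : G) x, σ (g • x) ∘ₗ C.ρ g = B.ρ g ∘ₗ σ x := by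
  let : MulAction G (C.V →ₗ[R] B.V) := MulAction.compHom _ (Representation.linHom C.ρ B.ρ)
  have smul_def (g : G) (s : C.V →ₗ[R] B.V) : g • s = B.ρ g ∘ₗ s ∘ₗ C.ρ g⁻¹ := rfl
  have sections_stable (g : G) (s : C.V →ₗ[R] B.V) (hs : p.hom.toLinearMap ∘ₗ s = LinearMap.id) :
      p.hom.toLinearMap ∘ₗ (g • s) = LinearMap.id := by
    ext c
    simpa [smul_def, Rep.hom_comm_apply] using congr(C.ρ g ($hs (C.ρ g⁻¹ c)))
  have exists_fixed_section (x : X) : ∃ s ∈ {s | p.hom.toLinearMap ∘ₗ s = LinearMap.id},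
      ∀ g ∈ MulAction.stabilizer G x, g • s = s := by
    obtain ⟨s, hs, hsH⟩ := h x
    refine ⟨s, LinearMap.ext hs, fun g hg => ?_⟩
    ext c
    simp [smul_def, hsH _ (inv_mem hg)]
  obtain ⟨σ, hσp, hσ⟩ :=
    MulAction.exists_equivariant_of_forall_stabilizer_fixed _ sections_stable exists_fixed_section
  refine ⟨σ, hσp, fun g x => ?_⟩
  ext c
  simp [hσ, smul_def]

lemma exists_section_whiskerRight_of_forall_stabilizer {X : Type} [MulAction G X]
    (h : ∀ x : X, IsHSplitSurj R G (MulAction.stabilizer G x) p) :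
    ∃ s : C ⊗ Rep.ofMulAction R G X ⟶ B ⊗ Rep.ofMulAction R G X,
      s ≫ p ▷ Rep.ofMulAction R G X = 𝟙 _ := by
  classical
  obtain ⟨σ, hσp, hσ⟩ := exists_equivariant_sections_of_forall_stabilizer h
  refine ⟨Rep.ofHom ⟨rTensorFamily σ, fun g => rTensorFamily_comp_map_ofMulAction σ g _ _ (hσ g)⟩,
    Rep.hom_ext (Representation.IntertwiningMap.ext ?_)⟩
  exact rTensor_comp_rTensorFamily _ σ hσp

lemma isHSplitSurj_of_section_whiskerRight {X : Type} [MulAction G X] {H : Subgroup G} {x : X}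
    (hx : ∀ h ∈ H, h • x = x) {s : C ⊗ Rep.ofMulAction R G X ⟶ B ⊗ Rep.ofMulAction R G X}
    (hs : s ≫ p ▷ Rep.ofMulAction R G X = 𝟙 _) : IsHSplitSurj R G H p := by
  classical
  let ι : C.V →ₗ[R] C.V ⊗[R] MonoidAlgebra R X := (mk R _ _).flip (MonoidAlgebra.single x 1)
  have hs' : p.hom.toLinearMap.rTensor _ ∘ₗ s.hom.toLinearMap = LinearMap.id :=
    congr(($hs).hom.toLinearMap)
  refine ⟨lcoeffTensor x ∘ₗ s.hom.toLinearMap ∘ₗ ι, fun c => ?_, fun h hh c => ?_⟩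
  · calc p.hom (lcoeffTensor x (s.hom (ι c)))
        = lcoeffTensor x (p.hom.toLinearMap.rTensor _ (s.hom (ι c))) :=
          (LinearMap.congr_fun (lcoeffTensor_comp_rTensor x _) _).symm
      _ = lcoeffTensor x (ι c) := congrArg _ (LinearMap.congr_fun hs' (ι c))
      _ = c := by simp [ι]
  · have hι : ι (C.ρ h c) = map (C.ρ h) (Representation.ofMulAction R G X h) (ι c) := by
      simp [ι, hx h hh]
    calc lcoeffTensor x (s.hom (ι (C.ρ h c)))
        = lcoeffTensor x (map (B.ρ h) (Representation.ofMulAction R G X h) (s.hom (ι c))) := by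
          rw [hι]; exact congrArg _ (Rep.hom_comm_apply s h (ι c))
      _ = B.ρ h (lcoeffTensor x (s.hom (ι c))) :=
          LinearMap.congr_fun (lcoeffTensor_comp_map_ofMulAction (hx h hh) (B.ρ h)) _

end RepSplitting

theorem fSplit_iff_tensorSplit_general
    (G : Type) [Group G] (R : Type) [CommRing R]
    (F : Set (Subgroup G))
    (X : Type) [MulAction G X]
    (hX : ∀ H : Subgroup G, H ∈ F ↔ ∃ x : X, ∀ h ∈ H, h • x = x)
    (B C : Rep R G) (p : B ⟶ C) :
    (∀ H ∈ F, IsHSplitSurj R G H p) ↔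
      ∃ s : C ⊗ Rep.ofMulAction R G X ⟶ B ⊗ Rep.ofMulAction R G X,
        s ≫ (p ▷ Rep.ofMulAction R G X) = 𝟙 (C ⊗ Rep.ofMulAction R G X) := by
  constructor
  · intro hF
    exact exists_section_whiskerRight_of_forall_stabilizer fun x =>
      hF _ ((hX _).2 ⟨x, fun _ hh => hh⟩)
  · rintro ⟨s, hs⟩ H hH
    obtain ⟨x, hx⟩ := (hX H).1 hH
    exact isHSplitSurj_of_section_whiskerRight hx hs

/-- Let `G` be a finite group, `R` a commutative ring, `F` a family of
subgroups of `G` closed under conjugation and under taking subgroups, and `X` a `G`-set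
such that `X^H ≠ ∅` if and only if `H ∈ F`.  Then a short exact sequence
`0 → A → B → C → 0` of `RG`-modules is `F`-split (i.e. splits after restriction to each
`H ∈ F`) if and only if `0 → A ⊗ RX → B ⊗ RX → C ⊗ RX → 0` (diagonal `G`-action, `RX`
the permutation module on `X`) splits as a sequence of `RG`-modules. -/
theorem fSplit_iff_tensorSplit
    (G : Type) [Group G] [Finite G] (R : Type) [CommRing R]
    (F : Set (Subgroup G))
    (hconj : ∀ H ∈ F, ∀ g : G, Subgroup.map (MulAut.conj g).toMonoidHom H ∈ F)
    (hsub : ∀ H ∈ F, ∀ K : Subgroup G, K ≤ H → K ∈ F)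
    (X : Type) [MulAction G X]
    (hX : ∀ H : Subgroup G, H ∈ F ↔ ∃ x : X, ∀ h ∈ H, h • x = x)
    (A B C : Rep R G) (i : A ⟶ B) (p : B ⟶ C)
    (hi : Function.Injective i.hom) (hp : Function.Surjective p.hom)
    (hexact : LinearMap.range i.hom.toLinearMap = LinearMap.ker p.hom.toLinearMap) :
    (∀ H ∈ F, IsHSplitSurj R G H p) ↔
      ∃ s : C ⊗ Rep.ofMulAction R G X ⟶ B ⊗ Rep.ofMulAction R G X,
        s ≫ (p ▷ Rep.ofMulAction R G X) = 𝟙 (C ⊗ Rep.ofMulAction R G X) :=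
  fSplit_iff_tensorSplit_general G R F X hX B C p
end

section
/- Let G be a finite group, R a commutative ring, H ≤ G a subgroup, and 0 → A → B → C → 0 a short exact sequence of RG-modules. Then the restriction of this sequence to H splits as a sequence of RH-modules if and only if the sequence 0 → A ⊗_R R[G/H] → B ⊗_R R[G/H] → C ⊗_R R[G/H] → 0 (diagonal G-action) splits as a sequence of RG-modules. -/
/-!
An `H`-equivariant section `s` of `p` is spread over `G/H`: its conjugates `g s g⁻¹` depend
only on `gH`, and applying the one indexed by `x` on the summand `C ⊗ x` of `C ⊗ R[G/H]` gives a
`G`-equivariant section of `p ⊗ R[G/H]`. Conversely, a `G`-equivariant section `S` of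
`p ⊗ R[G/H]` yields the section `c ↦` (coefficient of `1H` in `S (c ⊗ 1H)`) of `p`, which is
`H`-equivariant because `H` is the stabiliser of `1H`.
-/

open CategoryTheory MonoidalCategory

open MonoidAlgebra

section TensorMonoidAlgebra

open TensorProduct

variable {R X V W : Type} [CommRing R] [AddCommGroup V] [Module R V] [AddCommGroup W]
  [Module R W]

theorem tensorProduct_monoidAlgebra_ext {φ ψ : V ⊗[R] MonoidAlgebra R X →ₗ[R] W}
    (h : ∀ v x, φ (v ⊗ₜ single x 1) = ψ (v ⊗ₜ single x 1)) : φ = ψ :=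
  TensorProduct.ext <| LinearMap.ext fun v => (basis X R).ext fun x => by simpa using h v x

noncomputable def tensorCoeff (x : X) : V ⊗[R] MonoidAlgebra R X →ₗ[R] V :=
  TensorProduct.rid R V ∘ₗ
    LinearMap.lTensor V (Finsupp.lapply x ∘ₗ (coeffLinearEquiv R).toLinearMap)

@[simp]
theorem tensorCoeff_tmul (x : X) (v : V) (f : MonoidAlgebra R X) :
    tensorCoeff x (v ⊗ₜ f) = f.coeff x • v := by
  simp [tensorCoeff]

noncomputable def fiberwiseMap (σ : X → V →ₗ[R] W) :
    V ⊗[R] MonoidAlgebra R X →ₗ[R] W ⊗[R] MonoidAlgebra R X :=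
  TensorProduct.lift <|
    ((basis X R).constr R fun x => (TensorProduct.mk R W _).flip (single x 1) ∘ₗ σ x).flip

@[simp]
theorem fiberwiseMap_tmul_single (σ : X → V →ₗ[R] W) (v : V) (x : X) :
    fiberwiseMap σ (v ⊗ₜ single x 1) = σ x v ⊗ₜ single x 1 := by
  simp [fiberwiseMap, ← basis_apply]

end TensorMonoidAlgebra

namespace Rep

variable {R G X : Type} [CommRing R] [Group G] [MulAction G X] {B C : Rep R G}

theorem tensor_ofMulAction_ρ_tmul_single (g : G) (c : C.V) (x : X) (r : R) :
    (C ⊗ ofMulAction R G X).ρ g (c ⊗ₜ single x r) = C.ρ g c ⊗ₜ single (g • x) r := by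
  simp [Representation.tprod_apply, Representation.ofMulAction_single]

theorem tensorCoeff_ρ (g : G) (x : X) (z : (B ⊗ ofMulAction R G X).V) :
    tensorCoeff x ((B ⊗ ofMulAction R G X).ρ g z) = B.ρ g (tensorCoeff (g⁻¹ • x) z) := by
  have : tensorCoeff x ∘ₗ (B ⊗ ofMulAction R G X).ρ g =
      B.ρ g ∘ₗ tensorCoeff (g⁻¹ • x) :=
    TensorProduct.ext' fun b f => by
      simp [Representation.tprod_apply, Representation.coeff_ofMulAction]
  exact LinearMap.congr_fun this z

theorem tensorCoeff_whiskerRight (p : B ⟶ C) (x : X) (z : (B ⊗ ofMulAction R G X).V) :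
    p.hom (tensorCoeff x z) = tensorCoeff x ((p ▷ ofMulAction R G X).hom z) := by
  have : p.hom.toLinearMap ∘ₗ tensorCoeff x =
      tensorCoeff x ∘ₗ (p ▷ ofMulAction R G X).hom.toLinearMap :=
    TensorProduct.ext' fun b f => by simp
  exact LinearMap.congr_fun this z

theorem isHSplitSurj_of_whiskerRight_section {H : Subgroup G} {x₀ : X}
    (hH : H ≤ MulAction.stabilizer G x₀) {p : B ⟶ C}
    {S : C ⊗ ofMulAction R G X ⟶ B ⊗ ofMulAction R G X}
    (hS : S ≫ p ▷ ofMulAction R G X = 𝟙 _) :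
    IsHSplitSurj R G H p := by
  have hS' (z) : (p ▷ ofMulAction R G X).hom (S.hom z) = z := by
    simpa using ConcreteCategory.congr_hom hS z
  refine ⟨tensorCoeff x₀ ∘ₗ S.hom.toLinearMap ∘ₗ (TensorProduct.mk R C.V _).flip (single x₀ 1),
    fun c => ?_, fun h hh c => ?_⟩
  · change p.hom (tensorCoeff x₀ (S.hom (c ⊗ₜ single x₀ 1))) = c
    rw [tensorCoeff_whiskerRight, hS']
    simp
  · have hx₀ : h • x₀ = x₀ := hH hh
    have hc : C.ρ h c ⊗ₜ single x₀ 1 = (C ⊗ ofMulAction R G X).ρ h (c ⊗ₜ single x₀ (1 : R)) := by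
      rw [tensor_ofMulAction_ρ_tmul_single, hx₀]
    change tensorCoeff x₀ (S.hom (C.ρ h c ⊗ₜ _)) = B.ρ h (tensorCoeff x₀ (S.hom (c ⊗ₜ _)))
    rw [hc, hom_comm_apply, tensorCoeff_ρ, inv_smul_eq_iff.mpr hx₀.symm]

noncomputable def fiberwiseHom (σ : X → C.V →ₗ[R] B.V)
    (hσ : ∀ (g : G) x c, σ (g • x) (C.ρ g c) = B.ρ g (σ x c)) :
    C ⊗ ofMulAction R G X ⟶ B ⊗ ofMulAction R G X :=
  ofHom ⟨fiberwiseMap σ, fun g => tensorProduct_monoidAlgebra_ext fun c x => by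
    simp [hσ]⟩

theorem fiberwiseHom_comp_whiskerRight (σ : X → C.V →ₗ[R] B.V)
    (hσ : ∀ (g : G) x c, σ (g • x) (C.ρ g c) = B.ρ g (σ x c)) (p : B ⟶ C)
    (hp : ∀ x c, p.hom (σ x c) = c) :
    fiberwiseHom σ hσ ≫ p ▷ ofMulAction R G X = 𝟙 _ := by
  ext1; ext1
  refine tensorProduct_monoidAlgebra_ext fun c x => ?_
  simp [fiberwiseHom, hp]

variable {H : Subgroup G} (s : C.V →ₗ[R] B.V)
  (hs : ∀ h ∈ H, ∀ c, s (C.ρ h c) = B.ρ h (s c))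

noncomputable def conjugateSection : G ⧸ H → C.V →ₗ[R] B.V :=
  Quotient.lift (fun g => B.ρ g ∘ₗ s ∘ₗ C.ρ g⁻¹) fun a b hab => by
    obtain ⟨h, hh, rfl⟩ : ∃ h ∈ H, b = a * h :=
      ⟨a⁻¹ * b, QuotientGroup.leftRel_apply.mp hab, by group⟩
    ext c
    simp [map_mul, ← hs h hh]

theorem conjugateSection_mk (g : G) :
    conjugateSection s hs (g : G ⧸ H) = B.ρ g ∘ₗ s ∘ₗ C.ρ g⁻¹ :=
  rfl

theorem conjugateSection_smul (g : G) (x : G ⧸ H) (c : C.V) :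
    conjugateSection s hs (g • x) (C.ρ g c) = B.ρ g (conjugateSection s hs x c) := by
  induction x using QuotientGroup.induction_on with
  | H a => simp [MulAction.Quotient.smul_mk, conjugateSection_mk, map_mul]

theorem hom_conjugateSection_apply {p : B ⟶ C} (hps : ∀ c, p.hom (s c) = c) (x : G ⧸ H)
    (c : C.V) :
    p.hom (conjugateSection s hs x c) = c := by
  induction x using QuotientGroup.induction_on with
  | H a => simp [conjugateSection_mk, hom_comm_apply, hps]

end Rep

theorem restrictionSplit_iff_tensorSplit_general
    (G : Type) [Group G] (R : Type) [CommRing R] (H : Subgroup G)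
    (B C : Rep R G) (p : B ⟶ C) :
    IsHSplitSurj R G H p ↔
      ∃ s : C ⊗ Rep.ofMulAction R G (G ⧸ H) ⟶ B ⊗ Rep.ofMulAction R G (G ⧸ H),
        s ≫ (p ▷ Rep.ofMulAction R G (G ⧸ H)) = 𝟙 (C ⊗ Rep.ofMulAction R G (G ⧸ H)) := by
  constructor
  · rintro ⟨s, hps, hs⟩
    exact ⟨_, Rep.fiberwiseHom_comp_whiskerRight _ (Rep.conjugateSection_smul s hs) p
      (Rep.hom_conjugateSection_apply s hs hps)⟩
  · rintro ⟨S, hS⟩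
    exact Rep.isHSplitSurj_of_whiskerRight_section (MulAction.stabilizer_quotient H).ge hS

/-- Let `G` be a finite group, `R` a commutative ring, `H ≤ G` a
subgroup, and `0 → A → B → C → 0` a short exact sequence of `RG`-modules.  Then the
restriction of this sequence to `H` splits as a sequence of `RH`-modules if and only if
the sequence `0 → A ⊗ R[G/H] → B ⊗ R[G/H] → C ⊗ R[G/H] → 0` (with the diagonal
`G`-action) splits as a sequence of `RG`-modules. -/
theorem restrictionSplit_iff_tensorSplit
    (G : Type) [Group G] [Finite G] (R : Type) [CommRing R] (H : Subgroup G)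
    (A B C : Rep R G) (i : A ⟶ B) (p : B ⟶ C)
    (hi : Function.Injective i.hom) (hp : Function.Surjective p.hom)
    (hexact : LinearMap.range i.hom.toLinearMap = LinearMap.ker p.hom.toLinearMap) :
    IsHSplitSurj R G H p ↔
      ∃ s : C ⊗ Rep.ofMulAction R G (G ⧸ H) ⟶ B ⊗ Rep.ofMulAction R G (G ⧸ H),
        s ≫ (p ▷ Rep.ofMulAction R G (G ⧸ H)) = 𝟙 (C ⊗ Rep.ofMulAction R G (G ⧸ H)) :=
  restrictionSplit_iff_tensorSplit_general G R H B C p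
end

section
/- Let G be a finite group, R a commutative ring, F a family of subgroups of G closed under conjugation and under taking subgroups, and Γ = Or_F(G). If P and Q are projective RΓ-modules, then the objectwise tensor product P ⊗_R Q, defined by (P ⊗_R Q)(G/H) = P(G/H) ⊗_R Q(G/H) with structure maps (P ⊗_R Q)(f) = P(f) ⊗ Q(f), is a projective RΓ-module. -/
open CategoryTheory MonoidalCategory

/-- Objects of the orbit category `Γ = Or_F(G)`: the orbits `G/H` with `H ∈ F`,
recorded by the subgroup `H`. -/
structure OrbitCat (G : Type) [Group G] (F : Set (Subgroup G)) : Type where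
  H : Subgroup G
  mem : H ∈ F

/-- Morphisms `G/H → G/K` in the orbit category are the `G`-equivariant maps. -/
instance {G : Type} [Group G] {F : Set (Subgroup G)} : Category (OrbitCat G F) where
  Hom X Y := {f : G ⧸ X.H → G ⧸ Y.H // ∀ (g : G) (x : G ⧸ X.H), f (g • x) = g • f x}
  id X := ⟨id, fun _ _ => rfl⟩
  comp f g := ⟨g.1 ∘ f.1, fun a x => by simp [f.2, g.2]⟩

/-- The orbit category viewed inside the category of `G`-sets. -/
def orbitToAction (G : Type) [Group G] (F : Set (Subgroup G)) :
    OrbitCat G F ⥤ Action (Type) (MonCat.of G) where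
  obj X := Action.ofMulAction G (G ⧸ X.H)
  map f := { hom := TypeCat.ofHom f.1, comm := by intro g; ext x; exact f.2 g x }
  map_id X := rfl
  map_comp f g := rfl

/-- The category of `RΓ`-modules: contravariant functors from the orbit category
`Γ = Or_F(G)` to the category of `R`-modules. -/
abbrev OrbitModule (R : Type) [CommRing R] (G : Type) [Group G] (F : Set (Subgroup G)) :
    Type _ := (OrbitCat G F)ᵒᵖ ⥤ ModuleCat R

/-- The constant `RΓ`-module `R̲`, with value `R` at every object and all structure
maps the identity. -/
def constMod (R : Type) [CommRing R] (G : Type) [Group G] (F : Set (Subgroup G)) :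
    OrbitModule R G F := (CategoryTheory.Functor.const _).obj (ModuleCat.of R R)

/-- The linearization functor sending `G/H` to the permutation representation `R[G/H]`. -/
noncomputable def linOrbit (R : Type) [CommRing R] (G : Type) [Group G]
    (F : Set (Subgroup G)) : OrbitCat G F ⥤ Rep R G :=
  orbitToAction G F ⋙ Rep.linearization R G

/-- The `RΓ`-module `M^?` attached to an `RG`-module `M`, whose value at `G/H` is
`Hom_{RG}(R[G/H], M) ≅ M^H`, with structure maps induced by composition (i.e. the usual
restriction and conjugation maps on fixed points). -/
noncomputable def fixedPointsMod (R : Type) [CommRing R] (G : Type) [Group G]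
    (F : Set (Subgroup G)) (M : Rep R G) : OrbitModule R G F :=
  (linOrbit R G F).op ⋙ (CategoryTheory.linearYoneda R (Rep R G)).obj M

/-!
A projective `RΓ`-module is a retract of the linearization `R[X]` of a free `Γ`-set `X`, i.e. of a
disjoint union of representables, and `R[X] ⊗ R[Y] ≅ R[X × Y]`. It therefore suffices that
`X × Y` is again free, and this reduces to products of representables: a pair of maps
`G/L → G/H`, `G/L → G/K` is a `G`-map `G/L → G/H × G/K`, and `G/H × G/K` is the disjoint union
of its orbits `G/(H ∩ gKg⁻¹)`, whose isotropy groups lie in `F` because they are subgroups of `H`.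
-/

open Opposite

universe u

namespace CategoryTheory

def Retract.tensor {D : Type*} [Category D] [MonoidalCategory D] {X Y X' Y' : D}
    (h : Retract X Y) (h' : Retract X' Y') : Retract (X ⊗ X') (Y ⊗ Y') where
  i := h.i ⊗ₘ h'.i
  r := h.r ⊗ₘ h'.r
  retract := by rw [tensorHom_comp_tensorHom, h.retract, h'.retract, id_tensorHom_id]

instance Functor.preservesEpimorphisms_whiskeringRight {K D E : Type*} [Category K] [Category D]
    [Category E] [Limits.HasPushouts D] (H : D ⥤ E) [H.PreservesEpimorphisms] :
    ((Functor.whiskeringRight K D E).obj H).PreservesEpimorphisms where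
  preserves f _ := by dsimp; infer_instance

variable {C : Type u} [SmallCategory C]

/-- `X ≅ ∐ᵢ yoneda (c i)`, witnessed by the generators `x i ∈ X(c i)`. -/
def IsFreePresheaf (X : Cᵒᵖ ⥤ Type u) : Prop :=
  ∃ (ι : Type u) (c : ι → C) (x : ∀ i, X.obj (op (c i))),
    ∀ e : C, Function.Bijective fun p : Σ i, (e ⟶ c i) => X.map p.2.op (x p.1)

def sigmaYoneda {ι : Type u} (c : ι → C) : Cᵒᵖ ⥤ Type u where
  obj e := Σ i, (e.unop ⟶ c i)
  map τ := TypeCat.ofHom fun p => ⟨p.1, τ.unop ≫ p.2⟩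

theorem isFreePresheaf_sigmaYoneda {ι : Type u} (c : ι → C) : IsFreePresheaf (sigmaYoneda c) :=
  ⟨ι, c, fun i => ⟨i, 𝟙 (c i)⟩, fun e => by
    show Function.Bijective fun p : Σ i, (e ⟶ c i) => (⟨p.1, p.2 ≫ 𝟙 _⟩ : Σ i, (e ⟶ c i))
    simp only [Category.comp_id]
    exact Function.bijective_id⟩

theorem IsFreePresheaf.projective {X : Cᵒᵖ ⥤ Type u} (hX : IsFreePresheaf X) :
    Projective X := by
  obtain ⟨ι, c, x, hx⟩ := hX
  choose rep hrep using fun e => (hx e).2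
  simp only at hrep
  have rep_map : ∀ {e e' : Cᵒᵖ} (τ : e ⟶ e') (y : X.obj e),
      rep e'.unop (X.map τ y) = ⟨(rep e.unop y).1, τ.unop ≫ (rep e.unop y).2⟩ := fun τ y =>
    (hx _).1 (by simp only [hrep, op_comp, Functor.map_comp_apply, Quiver.Hom.op_unop])
  refine ⟨fun {M N} f p hp => ?_⟩
  rw [NatTrans.epi_iff_epi_app] at hp
  choose m hm using fun i => (epi_iff_surjective (p.app (op (c i)))).1 (hp _) (f.app _ (x i))
  refine ⟨{ app e := TypeCat.ofHom fun y => M.map (rep e.unop y).2.op (m (rep e.unop y).1)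
            naturality e e' τ := ?_ }, ?_⟩
  · ext y
    dsimp
    rw [rep_map τ y, op_comp, Functor.map_comp_apply, Quiver.Hom.op_unop]
  · ext e y
    dsimp
    rw [NatTrans.naturality_apply, hm, ← NatTrans.naturality_apply, hrep]

theorem IsFreePresheaf.tensor (hrep : ∀ c d : C, IsFreePresheaf (yoneda.obj c ⊗ yoneda.obj d))
    {X Y : Cᵒᵖ ⥤ Type u} (hX : IsFreePresheaf X) (hY : IsFreePresheaf Y) :
    IsFreePresheaf (X ⊗ Y) := by
  obtain ⟨ι, c, x, hx⟩ := hX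
  obtain ⟨κ, d, y, hy⟩ := hY
  choose Ω b kl hkl using hrep
  refine ⟨Σ p : ι × κ, Ω (c p.1) (d p.2), fun q => b _ _ q.2,
    fun q => (X.map (kl _ _ q.2).1.op (x q.1.1), Y.map (kl _ _ q.2).2.op (y q.1.2)), fun e => ?_⟩
  let pairs : (Σ p : ι × κ, (e ⟶ c p.1) × (e ⟶ d p.2)) ≃ (Σ i, e ⟶ c i) × (Σ j, e ⟶ d j) :=
    { toFun := fun q => (⟨q.1.1, q.2.1⟩, ⟨q.1.2, q.2.2⟩)
      invFun := fun q => ⟨(q.1.1, q.2.1), (q.1.2, q.2.2)⟩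
      left_inv := fun _ => rfl
      right_inv := fun _ => rfl }
  let E : (Σ q : Σ p : ι × κ, Ω (c p.1) (d p.2), (e ⟶ b _ _ q.2)) ≃ (X ⊗ Y).obj (op e) :=
    (Equiv.sigmaAssoc fun (p : ι × κ) ω => e ⟶ b (c p.1) (d p.2) ω).trans
      ((Equiv.sigmaCongrRight fun p : ι × κ => Equiv.ofBijective _ (hkl (c p.1) (d p.2) e)).trans
        (pairs.trans ((Equiv.ofBijective _ (hx e)).prodCongr (Equiv.ofBijective _ (hy e)))))
  convert E.bijective using 1
  funext ⟨⟨p, ω⟩, χ⟩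
  exact Prod.ext (X.map_comp_apply _ _ _).symm (Y.map_comp_apply _ _ _).symm

variable (R : Type u) [CommRing R]

noncomputable abbrev linearization : (Cᵒᵖ ⥤ Type u) ⥤ (Cᵒᵖ ⥤ ModuleCat.{u} R) :=
  (Functor.whiskeringRight Cᵒᵖ _ _).obj (ModuleCat.free R)

theorem projective_linearization_obj {X : Cᵒᵖ ⥤ Type u} (hX : Projective X) :
    Projective ((linearization R).obj X) :=
  ((ModuleCat.adj R).whiskerRight Cᵒᵖ).map_projective X hX

variable {R} in
theorem exists_retract_linearization {P : Cᵒᵖ ⥤ ModuleCat.{u} R} (hP : Projective P) :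
    ∃ X : Cᵒᵖ ⥤ Type u, IsFreePresheaf X ∧ Nonempty (Retract P ((linearization R).obj X)) := by
  let adj := (ModuleCat.adj R).whiskerRight Cᵒᵖ
  have := adj.isLeftAdjoint
  let π : sigmaYoneda (fun q : Σ c : C, P.obj (op c) => q.1) ⟶ P ⋙ forget _ :=
    { app e := TypeCat.ofHom fun q => P.map q.2.op q.1.2
      naturality e e' τ := by
        ext q
        exact P.map_comp_apply q.2.op τ q.1.2 }
  have : Epi π := by
    rw [NatTrans.epi_iff_epi_app]
    intro e
    rw [epi_iff_surjective]
    intro m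
    exact ⟨⟨⟨e.unop, m⟩, 𝟙 _⟩, show P.map (𝟙 _) m = m by simp⟩
  obtain ⟨s, hs⟩ := Projective.factors (𝟙 P) ((linearization R).map π ≫ adj.counit.app P)
  exact ⟨_, isFreePresheaf_sigmaYoneda _, ⟨⟨s, _, hs⟩⟩⟩

theorem projective_tensor_of_isFreePresheaf_yoneda_tensor
    (hrep : ∀ c d : C, IsFreePresheaf (yoneda.obj c ⊗ yoneda.obj d))
    {P Q : Cᵒᵖ ⥤ ModuleCat.{u} R} (hP : Projective P) (hQ : Projective Q) :
    Projective (P ⊗ Q) := by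
  obtain ⟨X, hX, ⟨rP⟩⟩ := exists_retract_linearization hP
  obtain ⟨Y, hY, ⟨rQ⟩⟩ := exists_retract_linearization hQ
  have := projective_linearization_obj R (hX.tensor hrep hY).projective
  exact ((rP.tensor rQ).trans (.ofIso (Functor.Monoidal.μIso (linearization R) X Y))).projective

end CategoryTheory

namespace OrbitCat

variable {G : Type} [Group G] {F : Set (Subgroup G)}

theorem hom_apply_mk {c d : OrbitCat G F} (f : c ⟶ d) (g : G) :
    f.1 g = g • f.1 (1 : G) := by
  rw [← f.2, MulAction.Quotient.smul_coe, smul_eq_mul, mul_one]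

theorem hom_ext {c d : OrbitCat G F} {f f' : c ⟶ d} (h : f.1 (1 : G) = f'.1 (1 : G)) :
    f = f' :=
  Subtype.ext <| funext fun x =>
    QuotientGroup.induction_on x fun g => by rw [hom_apply_mk, h, ← hom_apply_mk]

theorem smul_hom_apply_one {c d : OrbitCat G F} (f : c ⟶ d) {h : G} (hh : h ∈ c.H) :
    h • f.1 (1 : G) = f.1 (1 : G) := by
  have h_one : ((h : G) : G ⧸ c.H) = ((1 : G) : G ⧸ c.H) :=
    QuotientGroup.eq.2 (by simpa using inv_mem hh)
  rw [← hom_apply_mk, h_one]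

def homOfFixed {c d : OrbitCat G F} (y : G ⧸ d.H) (hy : c.H ≤ MulAction.stabilizer G y) :
    c ⟶ d :=
  ⟨MulAction.ofQuotientStabilizer G y ∘ Subgroup.quotientMapOfLE hy, fun g x =>
    QuotientGroup.induction_on x fun a => mul_smul g a y⟩

abbrev ProdOrbits (c d : OrbitCat G F) : Type :=
  MulAction.orbitRel.Quotient G ((G ⧸ c.H) × (G ⧸ d.H))

section Product

variable {c d : OrbitCat G F}

/-- The representative `(H, gK)` of an orbit of `G ⧸ H × G ⧸ K`. -/
noncomputable def orbitRep (ω : ProdOrbits c d) :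
    (G ⧸ c.H) × (G ⧸ d.H) :=
  ω.out.1.out⁻¹ • ω.out

theorem orbitRep_fst (ω : ProdOrbits c d) :
    (orbitRep ω).1 = ((1 : G) : G ⧸ c.H) := by
  rw [orbitRep, Prod.smul_fst]
  nth_rw 2 [← QuotientGroup.out_eq' ω.out.1]
  rw [MulAction.Quotient.smul_coe, smul_eq_mul, inv_mul_cancel]

theorem mk_orbitRep (ω : ProdOrbits c d) :
    (Quotient.mk'' (orbitRep ω) : ProdOrbits c d) = ω := by
  rw [← MulAction.orbitRel.Quotient.mem_orbit,
    MulAction.orbitRel.Quotient.orbit_eq_orbit_out ω Quotient.out_eq']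
  exact MulAction.mem_orbit _ _

theorem mem_orbit_orbitRep_iff {ω : ProdOrbits c d}
    {t : (G ⧸ c.H) × (G ⧸ d.H)} :
    t ∈ MulAction.orbit G (orbitRep ω) ↔ Quotient.mk'' t = ω := by
  rw [← MulAction.orbitRel.Quotient.orbit_eq_orbit_out ω mk_orbitRep,
    MulAction.orbitRel.Quotient.mem_orbit]

theorem stabilizer_orbitRep_le (ω : ProdOrbits c d) :
    MulAction.stabilizer G (orbitRep ω) ≤ c.H := by
  intro g hg
  rw [← MulAction.stabilizer_quotient c.H, MulAction.mem_stabilizer_iff, ← orbitRep_fst ω]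
  exact congrArg Prod.fst hg

variable (hsub : ∀ H ∈ F, ∀ K : Subgroup G, K ≤ H → K ∈ F)

noncomputable def orbitObj (ω : ProdOrbits c d) : OrbitCat G F :=
  ⟨MulAction.stabilizer G (orbitRep ω), hsub c.H c.mem _ (stabilizer_orbitRep_le ω)⟩

noncomputable def orbitFst (ω : ProdOrbits c d) : orbitObj hsub ω ⟶ c :=
  homOfFixed (orbitRep ω).1 fun _ hg => congrArg Prod.fst hg

noncomputable def orbitSnd (ω : ProdOrbits c d) : orbitObj hsub ω ⟶ d :=
  homOfFixed (orbitRep ω).2 fun _ hg => congrArg Prod.snd hg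

def pairPoint {e : OrbitCat G F} (kl : (e ⟶ c) × (e ⟶ d)) : (G ⧸ c.H) × (G ⧸ d.H) :=
  (kl.1.1 (1 : G), kl.2.1 (1 : G))

theorem pairPoint_injective {e : OrbitCat G F} :
    Function.Injective (pairPoint : (e ⟶ c) × (e ⟶ d) → _) :=
  fun _ _ h => Prod.ext (hom_ext (congrArg Prod.fst h)) (hom_ext (congrArg Prod.snd h))

theorem pairPoint_comp {e : OrbitCat G F} {ω : ProdOrbits c d} (χ : e ⟶ orbitObj hsub ω) :
    pairPoint (χ ≫ orbitFst hsub ω, χ ≫ orbitSnd hsub ω) =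
      MulAction.ofQuotientStabilizer G (orbitRep ω) (χ.1 (1 : G)) := by
  obtain ⟨g, hg⟩ := QuotientGroup.mk_surjective (χ.1 (1 : G))
  show ((orbitFst hsub ω).1 (χ.1 (1 : G)), (orbitSnd hsub ω).1 (χ.1 (1 : G))) = _
  rw [← hg]
  rfl

end Product

theorem isFreePresheaf_yoneda_tensor (hsub : ∀ H ∈ F, ∀ K : Subgroup G, K ≤ H → K ∈ F)
    (c d : OrbitCat G F) :
    IsFreePresheaf (yoneda.obj c ⊗ yoneda.obj d) := by
  refine ⟨ProdOrbits c d, orbitObj hsub, fun ω => (orbitFst hsub ω, orbitSnd hsub ω),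
    fun e => ?_⟩
  show Function.Bijective fun p : Σ ω, (e ⟶ orbitObj hsub ω) =>
    (p.2 ≫ orbitFst hsub p.1, p.2 ≫ orbitSnd hsub p.1)
  constructor
  · rintro ⟨ω, χ⟩ ⟨ω', χ'⟩ h
    have h' := congrArg pairPoint h
    simp only [pairPoint_comp] at h'
    obtain rfl : ω = ω' := calc
      ω = Quotient.mk'' (MulAction.ofQuotientStabilizer G (orbitRep ω) (χ.1 (1 : G))) :=
        (mem_orbit_orbitRep_iff.1 (MulAction.ofQuotientStabilizer_mem_orbit G _ _)).symm
      _ = ω' := h' ▸ mem_orbit_orbitRep_iff.1 (MulAction.ofQuotientStabilizer_mem_orbit G _ _)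
    exact Sigma.ext rfl (heq_of_eq (hom_ext (MulAction.injective_ofQuotientStabilizer G _ h')))
  · intro kl
    let ω : ProdOrbits c d := Quotient.mk'' (pairPoint kl)
    obtain ⟨g, hg : g • orbitRep ω = pairPoint kl⟩ := mem_orbit_orbitRep_iff.2 (rfl : _ = ω)
    have hfix :
        e.H ≤ MulAction.stabilizer G ((g : G) : G ⧸ MulAction.stabilizer G (orbitRep ω)) := by
      intro h hh
      apply MulAction.injective_ofQuotientStabilizer G (orbitRep ω)
      rw [MulAction.ofQuotientStabilizer_smul, MulAction.ofQuotientStabilizer_mk, hg]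
      exact Prod.ext (smul_hom_apply_one kl.1 hh) (smul_hom_apply_one kl.2 hh)
    refine ⟨⟨ω, homOfFixed _ hfix⟩, pairPoint_injective ?_⟩
    rw [pairPoint_comp]
    show MulAction.ofQuotientStabilizer G _ ((1 : G) • ((g : G) : G ⧸ _)) = _
    rw [one_smul]
    exact hg

end OrbitCat

theorem projective_tensorObj_general
    (G : Type) [Group G] (R : Type) [CommRing R]
    (F : Set (Subgroup G))
    (hsub : ∀ H ∈ F, ∀ K : Subgroup G, K ≤ H → K ∈ F)
    (P Q : OrbitModule R G F)
    (hP : Projective P) (hQ : Projective Q) :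
    Projective (P ⊗ Q) :=
  projective_tensor_of_isFreePresheaf_yoneda_tensor R (OrbitCat.isFreePresheaf_yoneda_tensor hsub)
    hP hQ

/-- Let `Γ = Or_F(G)`.  If `P` and `Q` are projective `RΓ`-modules,
then so is their objectwise tensor product `P ⊗ Q` (the tensor product in the functor
category `Γᵒᵖ ⥤ Mod_R` is formed objectwise, with structure maps
`(P ⊗ Q)(f) = P(f) ⊗ Q(f)`). -/
theorem projective_tensorObj
    (G : Type) [Group G] [Finite G] (R : Type) [CommRing R]
    (F : Set (Subgroup G))
    (hconj : ∀ H ∈ F, ∀ g : G, Subgroup.map (MulAut.conj g).toMonoidHom H ∈ F)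
    (hsub : ∀ H ∈ F, ∀ K : Subgroup G, K ≤ H → K ∈ F)
    (P Q : OrbitModule R G F)
    (hP : Projective P) (hQ : Projective Q) :
    Projective (P ⊗ Q) :=
  projective_tensorObj_general G R F hsub P Q hP hQ
end

section
/- Let G be a finite group, R a commutative ring, F a family of subgroups of G closed under conjugation and under taking subgroups, Γ = Or_F(G), and H, K ∈ F. Then there is an isomorphism of RΓ-modules R[G/H^?] ⊗_R R[G/K^?] ≅ ⊕_{HgK ∈ H\G/K} R[G/(H ∩ gKg^{-1})^?], the direct sum running over a set of representatives of the double cosets H\G/K. -/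
open CategoryTheory MonoidalCategory

/-- The `RΓ`-module `R[G/K^?] = R Mor_Γ(-, G/K)`: the free `R`-module on the set of
`G`-maps `G/H → G/K` (equivalently, on the `H`-fixed points `(G/K)^H`), with structure
maps given by precomposition. -/
noncomputable def freeOrbitMod (R : Type) [CommRing R] (G : Type) [Group G]
    (F : Set (Subgroup G)) (K : OrbitCat G F) : OrbitModule R G F :=
  yoneda.obj K ⋙ ModuleCat.free R

/-! Evaluation at the base coset identifies `G`-maps `G/L → G/K` with the `L`-fixed points of
`G/K`. By Mackey's decomposition, `x ↦ (x H, x g K)` is a `G`-equivariant bijection from the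
disjoint union of the `G/(H ∩ gKg⁻¹)`, over representatives `g` of `H\G/K`, onto `G/H × G/K`.
Taking `L`-fixed points turns it into an isomorphism of presheaves of sets
`∐_{HgK} Mor(-, G/(H ∩ gKg⁻¹)) ≅ Mor(-, G/H) × Mor(-, G/K)`. Linearization is monoidal
(`R[X × Y] ≅ R[X] ⊗ R[Y]`) and, as a left adjoint, preserves coproducts. -/

open Limits MulAction

namespace MulAction

variable {G : Type} [Group G] {α : Type} [MulAction G α] {H : Subgroup G} {a : α}

def ofQuotientOfLEStabilizer (h : H ≤ stabilizer G a) : G ⧸ H → α :=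
  ofQuotientStabilizer G a ∘ Subgroup.quotientMapOfLE h

@[simp]
lemma ofQuotientOfLEStabilizer_mk (h : H ≤ stabilizer G a) (g : G) :
    ofQuotientOfLEStabilizer h (g : G ⧸ H) = g • a := rfl

lemma ofQuotientOfLEStabilizer_smul (h : H ≤ stabilizer G a) (g : G) (x : G ⧸ H) :
    ofQuotientOfLEStabilizer h (g • x) = g • ofQuotientOfLEStabilizer h x :=
  Quotient.inductionOn' x fun b => by simp [mul_smul]

lemma stabilizer_quotient_mk (K : Subgroup G) (g : G) :
    stabilizer G (g : G ⧸ K) = K.map (MulAut.conj g).toMonoidHom := by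
  have h := stabilizer_smul_eq_stabilizer_map_conj g ((1 : G) : G ⧸ K)
  rwa [stabilizer_quotient, Quotient.smul_coe, smul_eq_mul, mul_one] at h

end MulAction

theorem DoubleCoset.mackey_bijective {G : Type} [Group G] (H K : Subgroup G) :
    Function.Bijective fun z : Σ q : DoubleCoset.Quotient (H : Set G) K,
        G ⧸ (H ⊓ K.map (MulAut.conj q.out).toMonoidHom) =>
      (ofQuotientOfLEStabilizer (inf_le_left.trans (stabilizer_quotient H).ge) z.2,
        ofQuotientOfLEStabilizer (inf_le_right.trans (stabilizer_quotient_mk K z.1.out).ge) z.2) := by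
  constructor
  · rintro ⟨q, x⟩ ⟨q', x'⟩ hxx
    induction x using QuotientGroup.induction_on with | _ a => ?_
    induction x' using QuotientGroup.induction_on with | _ a' => ?_
    simp only [ofQuotientOfLEStabilizer_mk, Quotient.smul_coe, smul_eq_mul, mul_one,
      Prod.mk.injEq, QuotientGroup.eq] at hxx
    obtain ⟨hH, hK⟩ := hxx
    have hq : q = q' := by
      rw [← DoubleCoset.out_eq' H K q, ← DoubleCoset.out_eq' H K q', DoubleCoset.eq]
      exact ⟨a'⁻¹ * a, by simpa using H.inv_mem hH, _, hK, by group⟩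
    subst hq
    refine Sigma.ext rfl (heq_of_eq (QuotientGroup.eq.2 (Subgroup.mem_inf.2
      ⟨hH, Subgroup.mem_map_equiv.2 ?_⟩)))
    simpa [mul_assoc] using hK
  · rintro ⟨x, y⟩
    induction x using QuotientGroup.induction_on with | _ a => ?_
    induction y using QuotientGroup.induction_on with | _ b => ?_
    obtain ⟨h, k, hh, hk, hout⟩ := DoubleCoset.mk_out_eq_mul H K (a⁻¹ * b)
    -- `a h⁻¹ · out q = b k`, so `a h⁻¹` lies over `(a H, b K)`.
    refine ⟨⟨DoubleCoset.mk H K (a⁻¹ * b), ((a * h⁻¹ : G) : G ⧸ _)⟩, ?_⟩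
    simp only [ofQuotientOfLEStabilizer_mk, Quotient.smul_coe, smul_eq_mul, mul_one,
      Prod.mk.injEq, QuotientGroup.eq, hout]
    exact ⟨by simpa using hh, by simpa [mul_assoc] using K.inv_mem hk⟩

namespace OrbitCat

variable {G : Type} [Group G] {F : Set (Subgroup G)}

lemma le_stabilizer_apply_one {X Y : OrbitCat G F} (f : X ⟶ Y) :
    X.H ≤ stabilizer G (f.1 (1 : G)) := fun l hl => by
  have hl' : l • ((1 : G) : G ⧸ X.H) = (1 : G) := by
    rwa [← mem_stabilizer_iff, stabilizer_quotient]
  rw [mem_stabilizer_iff, ← f.2, hl']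

def homEquiv (X Y : OrbitCat G F) : (X ⟶ Y) ≃ {y : G ⧸ Y.H // X.H ≤ stabilizer G y} where
  toFun f := ⟨f.1 (1 : G), le_stabilizer_apply_one f⟩
  invFun y := ⟨ofQuotientOfLEStabilizer y.2, ofQuotientOfLEStabilizer_smul y.2⟩
  left_inv f := Subtype.ext <| funext fun x => Quotient.inductionOn' x fun g => by simp [← f.2]
  right_inv y := Subtype.ext (one_smul G y.1)

@[simp]
lemma homEquiv_comp_coe {X Y Z : OrbitCat G F} (f : X ⟶ Y) (g : Y ⟶ Z) :
    (homEquiv X Z (f ≫ g) : G ⧸ Z.H) = g.1 (homEquiv X Y f) := rfl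

lemma bijective_sigma_hom_of_bijective {ι : Type} {X Y : OrbitCat G F} {Z : ι → OrbitCat G F}
    (p : ∀ i, Z i ⟶ X) (r : ∀ i, Z i ⟶ Y)
    (h : Function.Bijective fun z : Σ i, G ⧸ (Z i).H => ((p z.1).1 z.2, (r z.1).1 z.2))
    (L : OrbitCat G F) :
    Function.Bijective fun f : Σ i, L ⟶ Z i => (f.2 ≫ p f.1, f.2 ≫ r f.1) := by
  constructor
  · rintro ⟨i, f⟩ ⟨j, f'⟩ hff
    obtain ⟨hp, hr⟩ := Prod.ext_iff.mp hff
    obtain ⟨rfl, hf⟩ := Sigma.mk.inj_iff.mp <|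
      h.1 (a₁ := ⟨i, homEquiv _ _ f⟩) (a₂ := ⟨j, homEquiv _ _ f'⟩) <|
        Prod.ext (congrArg (fun f => (homEquiv L X f : G ⧸ X.H)) hp)
          (congrArg (fun f => (homEquiv L Y f : G ⧸ Y.H)) hr)
    rw [(homEquiv _ _).injective (Subtype.ext (eq_of_heq hf))]
  · rintro ⟨f₁, f₂⟩
    obtain ⟨⟨i, z⟩, hz⟩ := h.2 (homEquiv _ _ f₁, homEquiv _ _ f₂)
    have hz₁ : (p i).1 z = homEquiv _ _ f₁ := congrArg Prod.fst hz
    have hz₂ : (r i).1 z = homEquiv _ _ f₂ := congrArg Prod.snd hz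
    have hfix : L.H ≤ stabilizer G z := fun l hl => by
      refine mem_stabilizer_iff.2 (eq_of_heq (Sigma.mk.inj_iff.mp (h.1 (Prod.ext ?_ ?_))).2)
      · show (p i).1 (l • z) = (p i).1 z
        rw [(p i).2, hz₁]
        exact mem_stabilizer_iff.1 ((homEquiv _ _ f₁).2 hl)
      · show (r i).1 (l • z) = (r i).1 z
        rw [(r i).2, hz₂]
        exact mem_stabilizer_iff.1 ((homEquiv _ _ f₂).2 hl)
    refine ⟨⟨i, (homEquiv L (Z i)).symm ⟨z, hfix⟩⟩, Prod.ext ?_ ?_⟩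
    · exact (homEquiv _ _).injective (Subtype.ext (by simpa using hz₁))
    · exact (homEquiv _ _).injective (Subtype.ext (by simpa using hz₂))

end OrbitCat

section Presheaves

open CartesianMonoidalCategory

variable {C : Type} [Category C]

noncomputable def isColimitCofanMkLiftYonedaMap {ι : Type} {X Y : C} {Z : ι → C}
    (p : ∀ i, Z i ⟶ X) (r : ∀ i, Z i ⟶ Y)
    (h : ∀ L : C, Function.Bijective fun f : Σ i, L ⟶ Z i => (f.2 ≫ p f.1, f.2 ≫ r f.1)) :
    IsColimit (Cofan.mk (yoneda.obj X ⊗ yoneda.obj Y)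
      fun i => lift (yoneda.map (p i)) (yoneda.map (r i))) :=
  evaluationJointlyReflectsColimits _ fun L => (isColimitMapCoconeCofanMkEquiv _ _ _).symm <|
    ((Cofan.nonempty_isColimit_iff_bijective_fromSigma _).2 (h L.unop)).some

noncomputable def tensorCompFreeIsoCoprodOfIsColimit (R : Type) [CommRing R] {ι : Type}
    {P Q : C ⥤ Type} {Z : ι → C ⥤ Type} {inj : ∀ i, Z i ⟶ P ⊗ Q}
    (hc : IsColimit (Cofan.mk _ inj)) :
    (P ⋙ ModuleCat.free R) ⊗ (Q ⋙ ModuleCat.free R) ≅ ∐ fun i => Z i ⋙ ModuleCat.free R :=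
  let W := (Functor.whiskeringRight C _ _).obj (ModuleCat.free R)
  have : PreservesColimitsOfShape (Discrete ι) (ModuleCat.free R) :=
    (ModuleCat.adj R).leftAdjoint_preservesColimits.preservesColimitsOfShape
  Functor.Monoidal.μIso W P Q ≪≫ W.mapIso (hc.coconePointUniqueUpToIso (colimit.isColimit _)) ≪≫
    PreservesCoproduct.iso W _

end Presheaves

theorem tensor_freeOrbitMod_iso_coprod_doubleCosets_general
    (G : Type) [Group G] (R : Type) [CommRing R]
    (F : Set (Subgroup G))
    (hsub : ∀ H ∈ F, ∀ K : Subgroup G, K ≤ H → K ∈ F)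
    (H K : Subgroup G) (hH : H ∈ F) (hK : K ∈ F) :
    Nonempty ((freeOrbitMod R G F ⟨H, hH⟩ ⊗ freeOrbitMod R G F ⟨K, hK⟩)
      ≅ ∐ fun q : DoubleCoset.Quotient (H : Set G) (K : Set G) =>
          freeOrbitMod R G F
            ⟨H ⊓ Subgroup.map (MulAut.conj (Quotient.out q)).toMonoidHom K,
              hsub H hH _ inf_le_left⟩) := by
  let J (q : DoubleCoset.Quotient (H : Set G) K) : OrbitCat G F :=
    ⟨H ⊓ Subgroup.map (MulAut.conj (Quotient.out q)).toMonoidHom K, hsub H hH _ inf_le_left⟩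
  let p q : J q ⟶ ⟨H, hH⟩ :=
    (OrbitCat.homEquiv _ _).symm ⟨_, inf_le_left.trans (stabilizer_quotient H).ge⟩
  let r q : J q ⟶ ⟨K, hK⟩ :=
    (OrbitCat.homEquiv _ _).symm ⟨_, inf_le_right.trans (stabilizer_quotient_mk K q.out).ge⟩
  exact ⟨tensorCompFreeIsoCoprodOfIsColimit R <| isColimitCofanMkLiftYonedaMap p r <|
    OrbitCat.bijective_sigma_hom_of_bijective p r (DoubleCoset.mackey_bijective H K)⟩

/-- Let `Γ = Or_F(G)` and `H, K ∈ F`.  Then there is an isomorphism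
of `RΓ`-modules `R[G/H^?] ⊗ R[G/K^?] ≅ ⊕_{HgK ∈ H\G/K} R[G/(H ∩ gKg⁻¹)^?]`, where the
direct sum runs over (canonically chosen) representatives of the double cosets
`H\G/K`. -/
theorem tensor_freeOrbitMod_iso_coprod_doubleCosets
    (G : Type) [Group G] [Finite G] (R : Type) [CommRing R]
    (F : Set (Subgroup G))
    (hconj : ∀ H ∈ F, ∀ g : G, Subgroup.map (MulAut.conj g).toMonoidHom H ∈ F)
    (hsub : ∀ H ∈ F, ∀ K : Subgroup G, K ≤ H → K ∈ F)
    (H K : Subgroup G) (hH : H ∈ F) (hK : K ∈ F) :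
    Nonempty ((freeOrbitMod R G F ⟨H, hH⟩ ⊗ freeOrbitMod R G F ⟨K, hK⟩)
      ≅ ∐ fun q : DoubleCoset.Quotient (H : Set G) (K : Set G) =>
          freeOrbitMod R G F
            ⟨H ⊓ Subgroup.map (MulAut.conj (Quotient.out q)).toMonoidHom K,
              hsub H hH _ inf_le_left⟩) :=
  tensor_freeOrbitMod_iso_coprod_doubleCosets_general G R F hsub H K hH hK
end

section
/- Let G be a finite group, R a commutative ring, F a family of subgroups of G closed under conjugation and under taking subgroups and containing the trivial subgroup, and Γ = Or_F(G). For every projective RΓ-module P and every RG-module M there is an isomorphism Hom_{RΓ}(P, M^?) ≅ Hom_{RG}(P(G/1), M) of R-modules. -/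
open CategoryTheory Opposite

/-- The object `G/1` of the orbit category. -/
def botObj (G : Type) [Group G] (F : Set (Subgroup G)) (hbot : ⊥ ∈ F) : OrbitCat G F :=
  ⟨⊥, hbot⟩

/-- Right multiplication by `g` as a `G`-map `G/1 → G/1`. -/
def rmulHom (G : Type) [Group G] (F : Set (Subgroup G)) (hbot : ⊥ ∈ F) (g : G) :
    botObj G F hbot ⟶ botObj G F hbot := by
  letI : (botObj G F hbot).H.Normal := (inferInstance : (⊥ : Subgroup G).Normal)
  refine ⟨fun x => x * (QuotientGroup.mk g : G ⧸ (botObj G F hbot).H), ?_⟩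
  intro h x
  induction x using QuotientGroup.induction_on with
  | _ a => simp [MulAction.Quotient.smul_mk, ← QuotientGroup.mk_mul, mul_assoc]

lemma rmulHom_one (G : Type) [Group G] (F : Set (Subgroup G)) (hbot : ⊥ ∈ F) :
    rmulHom G F hbot 1 = 𝟙 (botObj G F hbot) := by
  letI : (botObj G F hbot).H.Normal := (inferInstance : (⊥ : Subgroup G).Normal)
  apply Subtype.ext
  funext x
  show x * (QuotientGroup.mk 1 : G ⧸ (botObj G F hbot).H) = x
  rw [QuotientGroup.mk_one, mul_one]

lemma rmulHom_comp (G : Type) [Group G] (F : Set (Subgroup G)) (hbot : ⊥ ∈ F) (g₁ g₂ : G) :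
    rmulHom G F hbot g₁ ≫ rmulHom G F hbot g₂ = rmulHom G F hbot (g₁ * g₂) := by
  letI : (botObj G F hbot).H.Normal := (inferInstance : (⊥ : Subgroup G).Normal)
  apply Subtype.ext
  funext x
  show x * QuotientGroup.mk g₁ * QuotientGroup.mk g₂
      = x * (QuotientGroup.mk (g₁ * g₂) : G ⧸ (botObj G F hbot).H)
  rw [QuotientGroup.mk_mul, mul_assoc]

/-- Evaluation of an `RΓ`-module at the object `G/1`, as an `RG`-module: the group `G`
acts via the right-multiplication automorphisms of `G/1`. -/
noncomputable def evalOne (R : Type) [CommRing R] (G : Type) [Group G]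
    (F : Set (Subgroup G)) (hbot : ⊥ ∈ F) : OrbitModule R G F ⥤ Rep R G where
  obj N := Rep.of
    { toFun := fun g => ((N.map (rmulHom G F hbot g).op).hom :
        N.obj (op (botObj G F hbot)) →ₗ[R] N.obj (op (botObj G F hbot)))
      map_one' := by
        show (N.map (rmulHom G F hbot 1).op).hom = _
        rw [rmulHom_one]
        show (N.map (𝟙 _)).hom = _
        rw [N.map_id]
        rfl
      map_mul' := fun g₁ g₂ => by
        have h : N.map (rmulHom G F hbot (g₁ * g₂)).op
            = N.map (rmulHom G F hbot g₂).op ≫ N.map (rmulHom G F hbot g₁).op := by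
          rw [← N.map_comp, ← op_comp, rmulHom_comp]
        show ((N.map (rmulHom G F hbot (g₁ * g₂)).op).hom :
            N.obj (op (botObj G F hbot)) →ₗ[R] N.obj (op (botObj G F hbot))) = _
        rw [h]
        rfl }
  map {N N'} α :=
    Rep.ofHom
      { toLinearMap := (α.app (op (botObj G F hbot))).hom
        isIntertwining' := fun g =>
          congrArg ModuleCat.Hom.hom (α.naturality (rmulHom G F hbot g).op) }
  map_id N := rfl
  map_comp α β := rfl

/-! An `RΓ`-map `α : P ⟶ M^?` is determined by the `RG`-map `P(G/1) → M`, `p ↦ α(p)(1·H)`: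
every `G`-map `G/1 → G/H` is `homOfPoint c`, determined by the image `c` of the trivial coset, so
naturality of `α` along `homOfPoint c` recovers `α(p)(c)` at any object `G/H`. Conversely an
`RG`-map `f : P(G/1) → M` extends to `P(G/H) → Hom_{RG}(R[G/H], M)` by sending `p` to the
linearization of `c ↦ f(P(homOfPoint c) p)`, which is `G`-equivariant because
`rmulHom g ≫ homOfPoint c = homOfPoint (g • c)`. -/

namespace Rep

variable {R G : Type} [CommRing R] [Monoid G]

noncomputable def linearizationLift (X : Action Type (MonCat.of G)) (M : Rep R G) (v : X.V → M)
    (hv : ∀ g x, v (X.ρ g x) = M.ρ g (v x)) : (linearization R G).obj X ⟶ M :=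
  ofHom ⟨Finsupp.linearCombination R v ∘ₗ (MonoidAlgebra.coeffLinearEquiv R).toLinearMap,
    fun g => by ext x; simp [hv]⟩

@[simp]
lemma linearizationLift_single (X : Action Type (MonCat.of G)) (M : Rep R G) (v : X.V → M)
    (hv : ∀ g x, v (X.ρ g x) = M.ρ g (v x)) (x : X.V) :
    (linearizationLift X M v hv).hom (.single x 1) = v x := by
  simp [linearizationLift]

lemma linearization_hom_ext {X : Action Type (MonCat.of G)} {M : Rep R G}
    {f f' : (linearization R G).obj X ⟶ M}
    (h : ∀ x, f.hom (.single x 1) = f'.hom (.single x 1)) : f = f' :=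
  hom_ext <| Representation.IntertwiningMap.ext <| MonoidAlgebra.lhom_ext' fun x =>
    LinearMap.ext_ring (h x)

end Rep

section OrbitMaps

variable {G : Type} [Group G] {R : Type} [CommRing R] {F : Set (Subgroup G)} (hbot : ⊥ ∈ F)

def homOfPoint (X : OrbitCat G F) (c : G ⧸ X.H) : botObj G F hbot ⟶ X := by
  refine ⟨fun x => Quotient.liftOn' x (· • c) fun a b hab => ?_, fun g x => ?_⟩
  · rw [inv_mul_eq_one.mp (Subgroup.mem_bot.mp (QuotientGroup.leftRel_apply.mp hab))]
  · induction x using QuotientGroup.induction_on with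
    | _ a => exact mul_smul g a c

@[simp]
lemma homOfPoint_apply_mk (X : OrbitCat G F) (c : G ⧸ X.H) (g : G) :
    (homOfPoint hbot X c).1 (QuotientGroup.mk g) = g • c := rfl

lemma homOfPoint_mk_one :
    homOfPoint hbot (botObj G F hbot) (QuotientGroup.mk 1) = 𝟙 (botObj G F hbot) := by
  refine Subtype.ext (funext fun x => ?_)
  induction x using QuotientGroup.induction_on with
  | _ a => exact congrArg QuotientGroup.mk (mul_one a)

lemma homOfPoint_comp {X Y : OrbitCat G F} (c : G ⧸ X.H) (u : X ⟶ Y) :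
    homOfPoint hbot X c ≫ u = homOfPoint hbot Y (u.1 c) := by
  refine Subtype.ext (funext fun x => ?_)
  induction x using QuotientGroup.induction_on with
  | _ a => exact u.2 a c

lemma rmulHom_eq_homOfPoint (g : G) :
    rmulHom G F hbot g = homOfPoint hbot (botObj G F hbot) (QuotientGroup.mk g) := by
  refine Subtype.ext (funext fun x => ?_)
  induction x using QuotientGroup.induction_on with
  | _ a => rfl

lemma rmulHom_comp_homOfPoint (X : OrbitCat G F) (c : G ⧸ X.H) (g : G) :
    rmulHom G F hbot g ≫ homOfPoint hbot X c = homOfPoint hbot X (g • c) := by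
  rw [rmulHom_eq_homOfPoint, homOfPoint_comp]
  rfl

lemma linOrbit_map_single {X Y : OrbitCat G F} (u : X ⟶ Y) (c : G ⧸ X.H) :
    ((linOrbit R G F).map u).hom (.single c 1) = .single (u.1 c) 1 :=
  Representation.linearizeMap_single ((orbitToAction G F).map u) c 1

lemma linOrbit_ρ_single (X : OrbitCat G F) (g : G) (c : G ⧸ X.H) :
    ((linOrbit R G F).obj X).ρ g (.single c 1) = .single (g • c) 1 :=
  Representation.linearize_single (X := (orbitToAction G F).obj X) g c

lemma linOrbit_hom_ext {X : OrbitCat G F} {M : Rep R G} {f f' : (linOrbit R G F).obj X ⟶ M}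
    (h : ∀ c : G ⧸ X.H, f.hom (.single c 1) = f'.hom (.single c 1)) : f = f' :=
  Rep.linearization_hom_ext h

lemma linOrbit_map_rmulHom_single_one (g : G) :
    ((linOrbit R G F).map (rmulHom G F hbot g)).hom (.single (QuotientGroup.mk 1) 1) =
      ((linOrbit R G F).obj (botObj G F hbot)).ρ g (.single (QuotientGroup.mk 1) 1) := by
  rw [linOrbit_map_single, linOrbit_ρ_single, rmulHom_eq_homOfPoint, homOfPoint_apply_mk,
    one_smul, MulAction.Quotient.smul_mk, smul_eq_mul, mul_one]

end OrbitMaps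

section EvalOneAdjunction

variable {G : Type} [Group G] {R : Type} [CommRing R] {F : Set (Subgroup G)} (hbot : ⊥ ∈ F)
  (P : OrbitModule R G F) (M : Rep R G)

instance : (evalOne R G F hbot).Additive where
  map_add := rfl

instance : (evalOne R G F hbot).Linear R where
  map_smul _ _ := rfl

noncomputable def fixedPointsCounit :
    (evalOne R G F hbot).obj (fixedPointsMod R G F M) ⟶ M :=
  Rep.ofHom
    { toFun x := x.hom (.single (QuotientGroup.mk 1) 1)
      map_add' _ _ := rfl
      map_smul' _ _ := rfl
      isIntertwining' g := LinearMap.ext fun (x : (linOrbit R G F).obj (botObj G F hbot) ⟶ M) =>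
        (congrArg x.hom (linOrbit_map_rmulHom_single_one hbot g)).trans
          (Rep.hom_comm_apply x g _) }

noncomputable def toEvalOneHom :
    (P ⟶ fixedPointsMod R G F M) →ₗ[R] ((evalOne R G F hbot).obj P ⟶ M) :=
  Linear.rightComp R _ (fixedPointsCounit hbot M) ∘ₗ (evalOne R G F hbot).mapLinearMap R

lemma toEvalOneHom_hom_apply (α : P ⟶ fixedPointsMod R G F M)
    (p : P.obj (op (botObj G F hbot))) :
    (toEvalOneHom hbot P M α).hom p =
      (α.app (op (botObj G F hbot)) p).hom (.single (QuotientGroup.mk 1) 1) :=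
  rfl

lemma evalOneHom_apply_homOfPoint_smul (f : (evalOne R G F hbot).obj P ⟶ M) {X : OrbitCat G F}
    (p : P.obj (op X)) (g : G) (c : G ⧸ X.H) :
    f.hom (P.map (homOfPoint hbot X (g • c)).op p) =
      M.ρ g (f.hom (P.map (homOfPoint hbot X c).op p)) := by
  rw [← rmulHom_comp_homOfPoint, op_comp, P.map_comp]
  exact Rep.hom_comm_apply f g _

noncomputable def ofEvalOneHomApp (f : (evalOne R G F hbot).obj P ⟶ M) (X : OrbitCat G F)
    (p : P.obj (op X)) : (linOrbit R G F).obj X ⟶ M :=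
  Rep.linearizationLift _ M (fun c => f.hom (P.map (homOfPoint hbot X c).op p))
    (evalOneHom_apply_homOfPoint_smul hbot P M f p)

@[simp]
lemma ofEvalOneHomApp_single (f : (evalOne R G F hbot).obj P ⟶ M) (X : OrbitCat G F)
    (p : P.obj (op X)) (c : G ⧸ X.H) :
    (ofEvalOneHomApp hbot P M f X p).hom (.single c 1) =
      f.hom (P.map (homOfPoint hbot X c).op p) :=
  Rep.linearizationLift_single ((orbitToAction G F).obj X) M _ _ c

noncomputable def ofEvalOneHom (f : (evalOne R G F hbot).obj P ⟶ M) :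
    P ⟶ fixedPointsMod R G F M where
  app X := ModuleCat.ofHom
    { toFun := ofEvalOneHomApp hbot P M f X.unop
      map_add' p q := linOrbit_hom_ext fun c => by
        change (ofEvalOneHomApp hbot P M f X.unop (p + q)).hom (.single c 1) =
          (ofEvalOneHomApp hbot P M f X.unop p).hom (.single c 1) +
            (ofEvalOneHomApp hbot P M f X.unop q).hom (.single c 1)
        simp only [ofEvalOneHomApp_single, map_add]
        exact map_add f.hom _ _
      map_smul' r p := linOrbit_hom_ext fun c => by
        change (ofEvalOneHomApp hbot P M f X.unop (r • p)).hom (.single c 1) =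
          r • (ofEvalOneHomApp hbot P M f X.unop p).hom (.single c 1)
        simp only [ofEvalOneHomApp_single, map_smul]
        exact map_smul f.hom r _ }
  naturality X Y u := by
    ext p : 2
    refine linOrbit_hom_ext fun c => ?_
    change (ofEvalOneHomApp hbot P M f Y.unop (P.map u p)).hom (.single c 1) =
      (ofEvalOneHomApp hbot P M f X.unop p).hom (((linOrbit R G F).map u.unop).hom (.single c 1))
    rw [linOrbit_map_single, ofEvalOneHomApp_single, ofEvalOneHomApp_single, ← homOfPoint_comp,
      op_comp, P.map_comp]
    rfl

lemma ofEvalOneHom_toEvalOneHom (α : P ⟶ fixedPointsMod R G F M) :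
    ofEvalOneHom hbot P M (toEvalOneHom hbot P M α) = α := by
  ext X p : 4
  refine linOrbit_hom_ext fun c => ?_
  change (ofEvalOneHomApp hbot P M _ X.unop p).hom (.single c 1) = _
  rw [ofEvalOneHomApp_single, toEvalOneHom_hom_apply, ← ModuleCat.comp_apply, α.naturality]
  change (α.app X p).hom
    (((linOrbit R G F).map (homOfPoint hbot X.unop c)).hom (.single (QuotientGroup.mk 1) 1)) = _
  rw [linOrbit_map_single, homOfPoint_apply_mk, one_smul]

lemma toEvalOneHom_ofEvalOneHom (f : (evalOne R G F hbot).obj P ⟶ M) :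
    toEvalOneHom hbot P M (ofEvalOneHom hbot P M f) = f := by
  ext p : 3
  refine (ofEvalOneHomApp_single hbot P M f (botObj G F hbot) p (QuotientGroup.mk 1)).trans ?_
  rw [homOfPoint_mk_one, op_id, P.map_id]
  rfl

noncomputable def homFixedPointsModEquiv :
    (P ⟶ fixedPointsMod R G F M) ≃ₗ[R] ((evalOne R G F hbot).obj P ⟶ M) :=
  { toEvalOneHom hbot P M with
    invFun := ofEvalOneHom hbot P M
    left_inv := ofEvalOneHom_toEvalOneHom hbot P M
    right_inv := toEvalOneHom_ofEvalOneHom hbot P M }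

end EvalOneAdjunction

theorem homFixedPointsMod_iso_homEvalOne_general
    (G : Type) [Group G] (R : Type) [CommRing R]
    (F : Set (Subgroup G))
    (hbot : ⊥ ∈ F)
    (P : OrbitModule R G F) (M : Rep R G) :
    Nonempty ((P ⟶ fixedPointsMod R G F M) ≃ₗ[R] ((evalOne R G F hbot).obj P ⟶ M)) :=
  ⟨homFixedPointsModEquiv hbot P M⟩

/-- Let `F` be a family of subgroups of a finite group `G` closed
under conjugation and under taking subgroups and containing the trivial subgroup, and
`Γ = Or_F(G)`.  For every projective `RΓ`-module `P` and every `RG`-module `M` there is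
an isomorphism of `R`-modules `Hom_{RΓ}(P, M^?) ≅ Hom_{RG}(P(G/1), M)`, where `P(G/1)`
is the evaluation of `P` at `G/1` with its natural `G`-action. -/
theorem homFixedPointsMod_iso_homEvalOne
    (G : Type) [Group G] [Finite G] (R : Type) [CommRing R]
    (F : Set (Subgroup G))
    (hconj : ∀ H ∈ F, ∀ g : G, Subgroup.map (MulAut.conj g).toMonoidHom H ∈ F)
    (hsub : ∀ H ∈ F, ∀ K : Subgroup G, K ≤ H → K ∈ F)
    (hbot : ⊥ ∈ F)
    (P : OrbitModule R G F) (hP : Projective P) (M : Rep R G) :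
    Nonempty ((P ⟶ fixedPointsMod R G F M) ≃ₗ[R] ((evalOne R G F hbot).obj P ⟶ M)) :=
  homFixedPointsMod_iso_homEvalOne_general G R F hbot P M
end

section
/- Let G = Z/2 × Z/2, let F = {1, H_1, H_2, H_3} be the family of proper subgroups of G, let R = F_2 and Γ = Or_F(G). Let R_0 denote the RΓ-module with value R at G/1 and value 0 at G/H_i for i = 1, 2, 3. Then for every n ≥ 0 there is an isomorphism Ext^n_{RΓ}(R_0, R̲) ≅ H^n(G, R) with the ordinary group cohomology of G with coefficients in the trivial module R. -/
open CategoryTheory Opposite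

/-- If there is a morphism `G/H → G/K` in the orbit category, then `H` is subconjugate
to `K`. -/
lemma OrbitCat.exists_conj_le_of_hom {G : Type} [Group G] {F : Set (Subgroup G)}
    {X Y : OrbitCat G F} (f : X ⟶ Y) :
    ∃ g : G, ∀ h ∈ X.H, g⁻¹ * h * g ∈ Y.H := by
  obtain ⟨g, hg⟩ := QuotientGroup.mk_surjective (f.1 (QuotientGroup.mk 1))
  refine ⟨g, fun h hh => ?_⟩
  have h1 : (h • (QuotientGroup.mk 1 : G ⧸ X.H)) = QuotientGroup.mk 1 := by
    rw [MulAction.Quotient.smul_mk]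
    exact (QuotientGroup.eq).2 (by simpa using hh)
  have h2 := f.2 h (QuotientGroup.mk 1)
  rw [h1, ← hg, MulAction.Quotient.smul_mk] at h2
  have h3 := (QuotientGroup.eq).1 h2
  simpa [mul_assoc] using h3

/-- In the orbit category of an abelian group, existence of a morphism `G/H → G/K`
forces `H ≤ K`. -/
lemma OrbitCat.le_of_hom {G : Type} [CommGroup G] {F : Set (Subgroup G)}
    {X Y : OrbitCat G F} (f : X ⟶ Y) : X.H ≤ Y.H := by
  intro h hh
  obtain ⟨g, hg⟩ := OrbitCat.exists_conj_le_of_hom f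
  have e : g⁻¹ * h * g = h := by
    rw [mul_comm g⁻¹ h, mul_assoc, inv_mul_cancel, mul_one]
  simpa [e] using hg h hh

/-- A subgroup contained in the cyclic subgroup generated by an element of square one
is trivial or the whole cyclic subgroup. -/
lemma le_zpowers_sq_one {G : Type} [CommGroup G] {c : G} (hc : c * c = 1)
    {y : Subgroup G} (hy : y ≤ Subgroup.zpowers c) :
    y = ⊥ ∨ y = Subgroup.zpowers c := by
  rcases y.bot_or_exists_ne_one with h | ⟨x, hx, hx1⟩
  · exact Or.inl h
  · right
    have hsq : ∀ m : ℤ, c ^ (m + m) = 1 := by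
      intro m
      rw [zpow_add, ← mul_zpow, hc, one_zpow]
    have hxc : x = c := by
      obtain ⟨k, hk⟩ := Subgroup.mem_zpowers_iff.1 (hy hx)
      rcases Int.even_or_odd k with ⟨m, hm⟩ | ⟨m, hm⟩
      · exact absurd (by rw [← hk, hm, hsq]) hx1
      · rw [← hk, hm, zpow_add, two_mul, hsq, one_mul, zpow_one]
    exact le_antisymm hy (Subgroup.zpowers_le.2 (hxc ▸ hx))
/-- The Klein four group `G = Z/2 × Z/2`. -/
abbrev K4 : Type := Multiplicative (ZMod 2) × Multiplicative (ZMod 2)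

/-- The first generator of `K4`. -/
def k4a : K4 := (Multiplicative.ofAdd 1, 1)

/-- The second generator of `K4`. -/
def k4b : K4 := (1, Multiplicative.ofAdd 1)

/-- The three subgroups of order 2 of the Klein four group:
`H_1 = ⟨a₁⟩`, `H_2 = ⟨a₁a₂⟩` and `H_3 = ⟨a₂⟩`. -/
def k4H : Fin 3 → Subgroup K4 :=
  ![Subgroup.zpowers k4a, Subgroup.zpowers (k4a * k4b), Subgroup.zpowers k4b]

/-- The family `F = {1, H_1, H_2, H_3}` of all proper (equivalently, cyclic) subgroups
of the Klein four group. -/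
def k4F : Set (Subgroup K4) := {H | H ≠ ⊤}

lemma k4_gen_sq (i : Fin 3) : ∃ c : K4, k4H i = Subgroup.zpowers c ∧ c * c = 1 := by
  fin_cases i
  · exact ⟨k4a, rfl, by decide⟩
  · exact ⟨k4a * k4b, rfl, by decide⟩
  · exact ⟨k4b, rfl, by decide⟩

/-- Closure property needed to define the `RΓ`-module `R_0`. -/
lemma k4_hS_bot : ∀ {X Y : (OrbitCat K4 k4F)ᵒᵖ}, (X ⟶ Y) →
    X.unop.H ∈ ({⊥} : Set (Subgroup K4)) → Y.unop.H ∈ ({⊥} : Set (Subgroup K4)) := by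
  intro X Y f hx
  have hle := OrbitCat.le_of_hom f.unop
  simp only [Set.mem_singleton_iff] at hx ⊢
  exact le_bot_iff.1 (hx ▸ hle)

/-- Closure property needed to define the `RΓ`-module `R_{H_i}`. -/
lemma k4_hS_H (i : Fin 3) : ∀ {X Y : (OrbitCat K4 k4F)ᵒᵖ}, (X ⟶ Y) →
    X.unop.H ∈ ({⊥, k4H i} : Set (Subgroup K4)) →
    Y.unop.H ∈ ({⊥, k4H i} : Set (Subgroup K4)) := by
  intro X Y f hx
  have hle := OrbitCat.le_of_hom f.unop
  obtain ⟨c, hci, hc⟩ := k4_gen_sq i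
  simp only [Set.mem_insert_iff, Set.mem_singleton_iff] at hx ⊢
  rcases hx with hx | hx
  · exact Or.inl (le_bot_iff.1 (hx ▸ hle))
  · have hy : Y.unop.H ≤ Subgroup.zpowers c := by
      rw [← hci, ← hx]; exact hle
    rcases le_zpowers_sq_one hc hy with h | h
    · exact Or.inl h
    · exact Or.inr (by rw [h, hci])
open scoped Classical in
/-- The `RΓ`-module with value `R` at the objects `G/H` with `H ∈ S` and value `0`
elsewhere, all structure maps between nonzero values being the identity of `R`. -/
noncomputable def suppMod (R : Type) [CommRing R] {G : Type} [Group G] {F : Set (Subgroup G)}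
    (S : Set (Subgroup G))
    (hS : ∀ {X Y : (OrbitCat G F)ᵒᵖ}, (X ⟶ Y) → X.unop.H ∈ S → Y.unop.H ∈ S) :
    OrbitModule R G F where
  obj X := ModuleCat.of R (PLift (X.unop.H ∈ S) → R)
  map {X Y} f := ModuleCat.ofHom
    { toFun := fun c _ => if hx : X.unop.H ∈ S then c ⟨hx⟩ else 0
      map_add' := fun c d => by
        funext hy
        by_cases hx : X.unop.H ∈ S <;> simp [hx]
      map_smul' := fun r c => by
        funext hy
        by_cases hx : X.unop.H ∈ S <;> simp [hx] }
  map_id X := by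
    apply ModuleCat.hom_ext; apply LinearMap.ext; intro c
    funext hy
    exact dif_pos hy.down
  map_comp {X Z Y} f g := by
    apply ModuleCat.hom_ext; apply LinearMap.ext; intro c
    funext hy
    show (if hx : (unop X).H ∈ S then c ⟨hx⟩ else 0)
        = (if hz : (unop Z).H ∈ S then (if hx : (unop X).H ∈ S then c ⟨hx⟩ else 0) else 0)
    by_cases hx : (unop X).H ∈ S
    · rw [dif_pos hx, dif_pos (hS f hx)]
    · rw [dif_neg hx]
      by_cases hz : (unop Z).H ∈ S <;> simp [hz]

open scoped Classical in
/-- For `S ⊆ T`, the map of `RΓ`-modules `suppMod S → suppMod T` which is the identity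
at the objects `G/H` with `H ∈ S` and zero elsewhere. -/
noncomputable def suppModMap (R : Type) [CommRing R] {G : Type} [Group G]
    {F : Set (Subgroup G)} (S T : Set (Subgroup G))
    (hS : ∀ {X Y : (OrbitCat G F)ᵒᵖ}, (X ⟶ Y) → X.unop.H ∈ S → Y.unop.H ∈ S)
    (hT : ∀ {X Y : (OrbitCat G F)ᵒᵖ}, (X ⟶ Y) → X.unop.H ∈ T → Y.unop.H ∈ T)
    (hST : S ⊆ T) :
    suppMod R S hS ⟶ suppMod R T hT where
  app X := ModuleCat.ofHom
    { toFun := fun c _ => if hx : X.unop.H ∈ S then c ⟨hx⟩ else 0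
      map_add' := fun c d => by
        funext hy
        by_cases hx : X.unop.H ∈ S <;> simp [hx]
      map_smul' := fun r c => by
        funext hy
        by_cases hx : X.unop.H ∈ S <;> simp [hx] }
  naturality {X Y} f := by
    apply ModuleCat.hom_ext; apply LinearMap.ext; intro c
    funext hy
    show (if hyS : (unop Y).H ∈ S then (if hx : (unop X).H ∈ S then c ⟨hx⟩ else 0) else 0)
        = (if hxT : (unop X).H ∈ T then (if hx : (unop X).H ∈ S then c ⟨hx⟩ else 0) else 0)
    by_cases hx : (unop X).H ∈ S
    · rw [dif_pos (hS f hx), dif_pos (hST hx), dif_pos hx]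
    · rw [dif_neg hx]
      by_cases hyS : (unop Y).H ∈ S <;> by_cases hxT : (unop X).H ∈ T <;> simp [hyS, hxT]

/-- The `RΓ`-module `R_0` with value `F_2` at `G/1` and value `0` at `G/H_i`. -/
noncomputable def r0Mod : OrbitModule (ZMod 2) K4 k4F :=
  suppMod (ZMod 2) {⊥} k4_hS_bot

/-- The `RΓ`-module `R_{H_i}` with value `F_2` at `G/1` and `G/H_i` (with identity
structure map between them) and value `0` at the other two subgroups of order 2. -/
noncomputable def rHMod (i : Fin 3) : OrbitModule (ZMod 2) K4 k4F :=
  suppMod (ZMod 2) {⊥, k4H i} (k4_hS_H i)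
universe uC vC

/-- The cochain complex of `R`-modules `Hom_C(P_*, N)` associated to a chain complex
`P_*` in an `R`-linear category `C`; when `P_*` is a projective resolution of `M`, its
`n`-th cohomology is `Ext^n_C(M, N)`. -/
noncomputable def homCochain (R : Type) [CommRing R] {C : Type uC}
    [CategoryTheory.Category.{vC} C]
    [CategoryTheory.Preadditive C] [CategoryTheory.Linear R C]
    (P : ChainComplex C ℕ) (N : C) : CochainComplex (ModuleCat R) ℕ :=
  CochainComplex.of (fun n => ((CategoryTheory.linearYoneda R C).obj N).obj
      (Opposite.op (P.X n)))
    (fun n => ((CategoryTheory.linearYoneda R C).obj N).map (P.d (n + 1) n).op)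
    (fun n => by
      rw [← CategoryTheory.Functor.map_comp, ← CategoryTheory.op_comp,
        HomologicalComplex.d_comp_d,
        show (0 : P.X (n + 1 + 1) ⟶ P.X n).op = 0 from rfl,
        CategoryTheory.Functor.map_zero])

/-!
Extension by zero `extZero : Rep R G ⥤ OrbitModule R G F` sends `M` to the `RΓ`-module with
value `Hom_G(G/1, M) ≅ M` at `G/1` and `0` elsewhere. It is exact, because evaluated at each
object it is either the forgetful functor or zero, and it is left adjoint to evaluation at `G/1`,
where `G` acts through the automorphisms `xH ↦ xgH` of `G/1`. As evaluation preserves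
epimorphisms, `extZero` preserves projectives, so it carries a projective resolution `P_*` of
the trivial module `R` to a projective resolution of `extZero R = R_0`; the adjunction identifies
`Hom_{RΓ}(extZero P_*, R̲)` with `Hom_{RG}(P_*, R̲(G/1)) = Hom_{RG}(P_*, R)`, whose cohomology
is `H^*(G, R)`.
-/

section Resolutions

variable {R : Type} [CommRing R] {C : Type uC} [Category.{vC} C] [Abelian C] [Linear R C]

noncomputable def homCochainIsoLinearYonedaObj (K : ChainComplex C ℕ) (N : C) :
    homCochain R K N ≅ K.linearYonedaObj R N :=
  HomologicalComplex.Hom.isoOfComponents (fun _ => Iso.refl _) fun i j hij => by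
    obtain rfl : i + 1 = j := hij
    dsimp only [homCochain, Iso.refl_hom]
    rw [CochainComplex.of_d]
    exact (Category.id_comp _).trans (Category.comp_id _).symm

noncomputable def CategoryTheory.ProjectiveResolution.ofIso {X Y : C}
    (P : ProjectiveResolution X) (e : X ≅ Y) : ProjectiveResolution Y where
  complex := P.complex
  π := P.π ≫ (ChainComplex.single₀ C).map e.hom

/-- Unlike `ProjectiveResolution.isoExt`, this does not need `EnoughProjectives C`. -/
noncomputable def CategoryTheory.ProjectiveResolution.linearYonedaObjHomologyIso {X : C}
    (P Q : ProjectiveResolution X) (N : C) (n : ℕ) :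
    (P.complex.linearYonedaObj R N).homology n ≅ (Q.complex.linearYonedaObj R N).homology n :=
  let L := ((linearYoneda R C).obj N).rightOp
  HomologicalComplex.homologyUnop _ n ≪≫
    (((L.mapHomotopyEquiv (P.homotopyEquiv Q)).toHomologyIso n).unop).symm ≪≫
    (HomologicalComplex.homologyUnop _ n).symm

end Resolutions

section Adjunction

variable {R : Type} [CommRing R] {C : Type uC} [Category.{vC} C] {D : Type*} [Category D]
  {L : C ⥤ D} {U : D ⥤ C}

noncomputable def CategoryTheory.Adjunction.homLinearEquiv [Preadditive C] [Preadditive D]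
    [Linear R C] [Linear R D] (adj : L ⊣ U) [L.Additive] [U.Linear R] (X : C) (Y : D) :
    (L.obj X ⟶ Y) ≃ₗ[R] (X ⟶ U.obj Y) :=
  { adj.homAddEquiv X Y with
    map_smul' r f := by simp [Adjunction.homEquiv_unit] }

noncomputable def CategoryTheory.Adjunction.linearYonedaObjMapIso [Abelian C] [Abelian D]
    [Linear R C] [Linear R D] (adj : L ⊣ U) [L.Additive] [U.Linear R]
    (K : ChainComplex C ℕ) (N : D) :
    ChainComplex.linearYonedaObj ((L.mapHomologicalComplex _).obj K) R N ≅
      K.linearYonedaObj R (U.obj N) :=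
  HomologicalComplex.Hom.isoOfComponents (fun i => (adj.homLinearEquiv (K.X i) N).toModuleIso)
    fun i j _ => by
      ext f
      exact (adj.homEquiv_naturality_left (K.d j i) f).symm

end Adjunction

namespace OrbitCat

variable {G : Type} [Group G] {F : Set (Subgroup G)}

lemma hom_ext_s13 {X Y : OrbitCat G F} {f g : X ⟶ Y} (h : f.1 = g.1) : f = g :=
  Subtype.ext h

lemma eq_bot_of_hom {X Y : OrbitCat G F} (f : X ⟶ Y) (hY : Y.H = ⊥) : X.H = ⊥ := by
  obtain ⟨g, hg⟩ := exists_conj_le_of_hom f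
  refine eq_bot_iff.2 fun h hh => Subgroup.mem_bot.2 ?_
  have h1 := hg h hh
  rwa [hY, Subgroup.mem_bot, mul_assoc, inv_mul_eq_one, eq_comm, mul_eq_right] at h1

/-- The orbit `G/1`. -/
def free (hF : (⊥ : Subgroup G) ∈ F) : OrbitCat G F := ⟨⊥, hF⟩

variable {hF : (⊥ : Subgroup G) ∈ F}

lemma eq_free {X : OrbitCat G F} (hX : X.H = ⊥) : X = free hF := by
  cases X
  cases hX
  rfl

lemma eq_op_free {X : (OrbitCat G F)ᵒᵖ} (hX : X.unop.H = ⊥) :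
    X = op (free (hX ▸ X.unop.mem)) :=
  congrArg op (eq_free hX)

variable (hF) in
noncomputable def freeEquiv : G ⧸ (free hF).H ≃ G :=
  (QuotientGroup.quotientBot : G ⧸ (⊥ : Subgroup G) ≃* G).toEquiv

@[simp] lemma freeEquiv_mk (x : G) : freeEquiv hF (QuotientGroup.mk x) = x := rfl

lemma freeEquiv_smul (g : G) (t : G ⧸ (free hF).H) :
    freeEquiv hF (g • t) = g * freeEquiv hF t := by
  obtain ⟨x, rfl⟩ := QuotientGroup.mk_surjective t
  rfl

variable (hF) in
noncomputable def rightMul (g : G) : free hF ⟶ free hF :=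
  ⟨fun t => QuotientGroup.mk (freeEquiv hF t * g), fun a t => by
    dsimp only
    rw [freeEquiv_smul, MulAction.Quotient.smul_mk, smul_eq_mul, mul_assoc]⟩

@[simp] lemma rightMul_apply (g x : G) :
    (rightMul hF g).1 (QuotientGroup.mk x) = QuotientGroup.mk (x * g) := rfl

lemma rightMul_mul (g h : G) : rightMul hF (g * h) = rightMul hF g ≫ rightMul hF h := by
  apply hom_ext_s13
  funext t
  obtain ⟨x, rfl⟩ := QuotientGroup.mk_surjective t
  exact congrArg QuotientGroup.mk (mul_assoc x g h).symm

lemma rightMul_one : rightMul hF (1 : G) = 𝟙 (free hF) := by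
  apply hom_ext_s13
  funext t
  obtain ⟨x, rfl⟩ := QuotientGroup.mk_surjective t
  exact congrArg QuotientGroup.mk (mul_one x)

variable (hF) in
def toFree (X : OrbitCat G F) (hX : X.H = ⊥) : X ⟶ free hF :=
  ⟨Quotient.map' id fun a b hab => by
      rw [QuotientGroup.leftRel_apply, hX] at hab
      exact QuotientGroup.leftRel_apply.2 hab, fun a t => by
    obtain ⟨x, rfl⟩ := QuotientGroup.mk_surjective t
    rfl⟩

lemma toFree_free : toFree hF (free hF) rfl = 𝟙 (free hF) := by
  apply hom_ext_s13
  funext t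
  obtain ⟨x, rfl⟩ := QuotientGroup.mk_surjective t
  rfl

lemma mk_freeEquiv_toFree {X : OrbitCat G F} (hX : X.H = ⊥) (t : G ⧸ X.H) :
    QuotientGroup.mk (freeEquiv hF ((toFree hF X hX).1 t)) = t := by
  obtain ⟨x, rfl⟩ := QuotientGroup.mk_surjective t
  rfl

lemma eq_toFree_comp_rightMul {Y : OrbitCat G F} (hY : Y.H = ⊥) (w : Y ⟶ free hF) :
    w = toFree hF Y hY ≫ rightMul hF (freeEquiv hF (w.1 (QuotientGroup.mk 1))) := by
  apply hom_ext_s13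
  funext t
  obtain ⟨x, rfl⟩ := QuotientGroup.mk_surjective t
  obtain ⟨y, hy⟩ := QuotientGroup.mk_surjective (w.1 (QuotientGroup.mk 1))
  have hx : (QuotientGroup.mk x : G ⧸ Y.H) = x • QuotientGroup.mk 1 := by
    rw [MulAction.Quotient.smul_mk, smul_eq_mul, mul_one]
  show w.1 (QuotientGroup.mk x) = (rightMul hF _).1 (QuotientGroup.mk x)
  rw [hx, w.2, ← hy, rightMul_apply]
  rfl

end OrbitCat

namespace OrbitModule

open OrbitCat Limits

variable {R : Type} [CommRing R] {G : Type} [Group G] {F : Set (Subgroup G)}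

section ExtZero

/-- `Hom_G(G/H, M)` cut down to `0` unless `H = 1`; phrased as a condition rather than a case
distinction on `X`, so that the structure maps of `extZero M` are plain precomposition. -/
def extZeroSubmodule (M : Rep R G) (X : OrbitCat G F) : Submodule R (G ⧸ X.H → M.V) where
  carrier := {c | (∀ g t, c (g • t) = M.ρ g (c t)) ∧ (X.H ≠ ⊥ → c = 0)}
  add_mem' := fun ⟨hc, hc0⟩ ⟨hd, hd0⟩ =>
    ⟨fun g t => by simp [hc g t, hd g t], fun h => by simp [hc0 h, hd0 h]⟩
  zero_mem' := ⟨fun g t => by simp, fun _ => rfl⟩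
  smul_mem' r _ := fun ⟨hc, hc0⟩ => ⟨fun g t => by simp [hc g t], fun h => by simp [hc0 h]⟩

lemma extZeroSubmodule_apply_mk {M : Rep R G} {X : OrbitCat G F} (c : extZeroSubmodule M X)
    (x : G) : c.1 (QuotientGroup.mk x) = M.ρ x (c.1 (QuotientGroup.mk 1)) := by
  rw [← c.2.1, MulAction.Quotient.smul_mk, smul_eq_mul, mul_one]

lemma extZeroSubmodule_eq_zero {M : Rep R G} {X : OrbitCat G F} (c : extZeroSubmodule M X)
    (hX : X.H ≠ ⊥) : c = 0 :=
  Subtype.ext (c.2.2 hX)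

abbrev extZeroObj (M : Rep R G) : OrbitModule R G F where
  obj X := ModuleCat.of R (extZeroSubmodule M X.unop)
  map {X Y} u := ModuleCat.ofHom <| (LinearMap.funLeft R M.V u.unop.1).restrict
    fun c ⟨hc, hc0⟩ => ⟨fun g t => by simp [LinearMap.funLeft, u.unop.2 g t, hc], fun hY => by
      simp [LinearMap.funLeft, hc0 fun hX => hY (eq_bot_of_hom u.unop hX)]⟩

variable (R G F) in
abbrev extZero : Rep R G ⥤ OrbitModule R G F where
  obj := extZeroObj
  map {M M'} β :=
    { app X := ModuleCat.ofHom <| (LinearMap.compLeft β.hom.toLinearMap _).restrict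
        fun c ⟨hc, hc0⟩ => ⟨fun g t => by simp [hc, Rep.hom_comm_apply], fun hX => by
          simp [hc0 hX]⟩ }

instance : (extZero R G F).Additive where
  map_add := rfl

noncomputable def extZeroFreeEquiv (hF : (⊥ : Subgroup G) ∈ F) (M : Rep R G) :
    extZeroSubmodule (F := F) M (free hF) ≃ₗ[R] M.V where
  toFun c := c.1 (QuotientGroup.mk 1)
  invFun m := ⟨fun t => M.ρ (freeEquiv hF t) m, fun g t => by
      dsimp only
      rw [freeEquiv_smul, map_mul]
      rfl, fun h => absurd rfl h⟩
  left_inv c := by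
    ext t
    obtain ⟨x, rfl⟩ := QuotientGroup.mk_surjective t
    exact (extZeroSubmodule_apply_mk c x).symm
  right_inv m := by simp
  map_add' _ _ := rfl
  map_smul' _ _ := rfl

noncomputable def extZeroEvalFreeIso (hF : (⊥ : Subgroup G) ∈ F) :
    extZero R G F ⋙ (evaluation _ _).obj (op (free hF)) ≅ forget₂ (Rep R G) (ModuleCat R) :=
  NatIso.ofComponents (fun M => (extZeroFreeEquiv hF M).toModuleIso) fun _ => rfl

lemma isZero_extZero_comp_eval {X : (OrbitCat G F)ᵒᵖ} (hX : X.unop.H ≠ ⊥) :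
    IsZero (extZero R G F ⋙ (evaluation _ _).obj X) := by
  rw [Functor.isZero_iff]
  intro M
  have : Subsingleton ((extZero R G F ⋙ (evaluation _ _).obj X).obj M) :=
    ⟨fun c d => by rw [extZeroSubmodule_eq_zero c hX, extZeroSubmodule_eq_zero d hX]⟩
  exact ModuleCat.isZero_of_subsingleton _

instance : PreservesFiniteLimits (extZero R G F) := by
  apply preservesFiniteLimits_of_evaluation
  intro X
  by_cases hX : X.unop.H = ⊥
  · rw [eq_op_free hX]
    exact preservesFiniteLimits_of_natIso (extZeroEvalFreeIso _).symm
  · exact ⟨fun J _ _ => Functor.preservesLimitsOfShape_of_isZero _ (isZero_extZero_comp_eval hX) J⟩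

instance : PreservesFiniteColimits (extZero R G F) := by
  apply preservesFiniteColimits_of_evaluation
  intro X
  by_cases hX : X.unop.H = ⊥
  · rw [eq_op_free hX]
    exact preservesFiniteColimits_of_natIso (extZeroEvalFreeIso _).symm
  · exact ⟨fun J _ _ =>
      Functor.preservesColimitsOfShape_of_isZero _ (isZero_extZero_comp_eval hX) J⟩

lemma extZeroSubmodule_trivial_apply {X : OrbitCat G F}
    (c : extZeroSubmodule (Rep.trivial R G R) X) (t : G ⧸ X.H) :
    c.1 t = c.1 (QuotientGroup.mk 1) := by
  obtain ⟨x, rfl⟩ := QuotientGroup.mk_surjective t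
  exact extZeroSubmodule_apply_mk c x

open scoped Classical in
noncomputable def extZeroTrivialIso
    (hS : ∀ {X Y : (OrbitCat G F)ᵒᵖ}, (X ⟶ Y) → X.unop.H ∈ ({⊥} : Set (Subgroup G)) →
      Y.unop.H ∈ ({⊥} : Set (Subgroup G))) :
    (extZero R G F).obj (Rep.trivial R G R) ≅ suppMod R {⊥} hS :=
  NatIso.ofComponents
    (fun X => LinearEquiv.toModuleIso
      { toFun c _ := c.1 (QuotientGroup.mk 1)
        invFun v := ⟨fun _ => if h : X.unop.H ∈ ({⊥} : Set (Subgroup G)) then v ⟨h⟩ else 0,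
          fun _ _ => rfl, fun hX => funext fun _ => dif_neg hX⟩
        left_inv c := by
          ext t
          by_cases hX : X.unop.H = ⊥
          · simp [hX, extZeroSubmodule_trivial_apply c t]
          · simp [hX, extZeroSubmodule_eq_zero c hX]
        right_inv v := by
          funext p
          exact dif_pos p.down
        map_add' _ _ := rfl
        map_smul' _ _ := rfl })
    fun {X Y} u => by
      ext c
      change extZeroSubmodule _ X.unop at c
      funext p
      show c.1 (u.unop.1 (QuotientGroup.mk 1))
        = if hX : X.unop.H ∈ ({⊥} : Set (Subgroup G)) then c.1 (QuotientGroup.mk 1) else 0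
      by_cases hX : X.unop.H ∈ ({⊥} : Set (Subgroup G))
      · rw [dif_pos hX, extZeroSubmodule_trivial_apply c]
      · rw [dif_neg hX, extZeroSubmodule_eq_zero c hX]
        rfl

end ExtZero

section EvalFree

variable (hF : (⊥ : Subgroup G) ∈ F)

noncomputable abbrev evalFreeObj (N : OrbitModule R G F) : Rep R G :=
  Rep.of (X := N.obj (op (free hF)))
    { toFun g := (N.map (rightMul hF g).op).hom
      map_one' := by rw [rightMul_one, op_id, N.map_id]; rfl
      map_mul' a b := by rw [rightMul_mul, op_comp, N.map_comp]; rfl }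

noncomputable abbrev evalFree : OrbitModule R G F ⥤ Rep R G where
  obj := evalFreeObj hF
  map α := Rep.ofHom ⟨(α.app _).hom, fun g => congrArg ModuleCat.Hom.hom (α.naturality _)⟩

instance : (evalFree (R := R) hF).Additive where
  map_add := rfl

instance : (evalFree (R := R) hF).Linear R where
  map_smul _ _ := rfl

instance : (evalFree (R := R) hF).PreservesEpimorphisms := by
  have : (evalFree hF ⋙ forget₂ (Rep R G) (ModuleCat R)).PreservesEpimorphisms :=
    ⟨fun α _ => (inferInstance : Epi (α.app (op (free hF))))⟩
  exact Functor.preservesEpimorphisms_of_preserves_of_reflects _ (forget₂ (Rep R G) (ModuleCat R))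

end EvalFree

section Adjunction

variable {hF : (⊥ : Subgroup G) ∈ F} {M : Rep R G} {N : OrbitModule R G F}

variable (hF) in
noncomputable def toEvalFree (α : (extZero R G F).obj M ⟶ N) : M ⟶ (evalFree hF).obj N :=
  Rep.ofHom ⟨(α.app (op (free hF))).hom ∘ₗ (extZeroFreeEquiv hF M).symm.toLinearMap, fun g => by
    ext m
    have hg : (extZeroFreeEquiv hF M).symm (M.ρ g m)
        = ((extZero R G F).obj M).map (rightMul hF g).op ((extZeroFreeEquiv hF M).symm m) := by
      ext t
      obtain ⟨x, rfl⟩ := QuotientGroup.mk_surjective t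
      show M.ρ x (M.ρ g m) = M.ρ (x * g) m
      rw [map_mul]
      rfl
    show α.app _ ((extZeroFreeEquiv hF M).symm (M.ρ g m))
      = N.map (rightMul hF g).op (α.app _ ((extZeroFreeEquiv hF M).symm m))
    rw [hg]
    exact NatTrans.naturality_apply α (rightMul hF g).op _⟩

variable (hF) in
open scoped Classical in
noncomputable def liftExtZeroApp (φ : M ⟶ (evalFree hF).obj N) (X : (OrbitCat G F)ᵒᵖ) :
    ((extZero R G F).obj M).obj X ⟶ N.obj X :=
  if hX : X.unop.H = ⊥ then
    ModuleCat.ofHom ((N.map (toFree hF X.unop hX).op).hom ∘ₗ φ.hom.toLinearMap ∘ₗ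
      LinearMap.proj (QuotientGroup.mk 1) ∘ₗ (extZeroSubmodule M X.unop).subtype)
  else 0

lemma liftExtZeroApp_apply_of_eq_bot (φ : M ⟶ (evalFree hF).obj N) {X : (OrbitCat G F)ᵒᵖ}
    (hX : X.unop.H = ⊥) (c : extZeroSubmodule M X.unop) :
    liftExtZeroApp hF φ X c
      = N.map (toFree hF X.unop hX).op (φ.hom (c.1 (QuotientGroup.mk 1))) := by
  rw [liftExtZeroApp, dif_pos hX]
  rfl

lemma liftExtZeroApp_of_ne_bot (φ : M ⟶ (evalFree hF).obj N) {X : (OrbitCat G F)ᵒᵖ}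
    (hX : X.unop.H ≠ ⊥) : liftExtZeroApp hF φ X = 0 :=
  dif_neg hX

lemma liftExtZeroApp_naturality (φ : M ⟶ (evalFree hF).obj N) {X Y : (OrbitCat G F)ᵒᵖ}
    (u : X ⟶ Y) :
    ((extZero R G F).obj M).map u ≫ liftExtZeroApp hF φ Y = liftExtZeroApp hF φ X ≫ N.map u := by
  by_cases hX : X.unop.H = ⊥
  · have hY := eq_bot_of_hom u.unop hX
    ext c
    change extZeroSubmodule M X.unop at c
    set γ := freeEquiv hF ((toFree hF X.unop hX).1 (u.unop.1 (QuotientGroup.mk 1)))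
    have hu : u.unop ≫ toFree hF X.unop hX = toFree hF Y.unop hY ≫ rightMul hF γ :=
      eq_toFree_comp_rightMul hY _
    have hc : c.1 (u.unop.1 (QuotientGroup.mk 1)) = M.ρ γ (c.1 (QuotientGroup.mk 1)) := by
      rw [← extZeroSubmodule_apply_mk, mk_freeEquiv_toFree]
    show liftExtZeroApp hF φ Y (((extZero R G F).obj M).map u c)
      = N.map u (liftExtZeroApp hF φ X c)
    rw [liftExtZeroApp_apply_of_eq_bot φ hY, liftExtZeroApp_apply_of_eq_bot φ hX,
      ← ConcreteCategory.comp_apply, ← N.map_comp,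
      show (toFree hF X.unop hX).op ≫ u = (u.unop ≫ toFree hF X.unop hX).op from rfl,
      hu, op_comp, N.map_comp, ConcreteCategory.comp_apply]
    congr 1
    exact (congrArg φ.hom hc).trans (Rep.hom_comm_apply φ γ _)
  · ext c
    change extZeroSubmodule M X.unop at c
    rw [liftExtZeroApp_of_ne_bot φ hX, extZeroSubmodule_eq_zero c hX]
    simp

variable (hF) in
noncomputable def liftExtZero (φ : M ⟶ (evalFree hF).obj N) : (extZero R G F).obj M ⟶ N where
  app := liftExtZeroApp hF φ
  naturality _ _ u := liftExtZeroApp_naturality φ u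

lemma liftExtZero_toEvalFree (α : (extZero R G F).obj M ⟶ N) :
    liftExtZero hF (toEvalFree hF α) = α := by
  ext X c
  change extZeroSubmodule M X.unop at c
  by_cases hX : X.unop.H = ⊥
  · have hc : ((extZero R G F).obj M).map (toFree hF X.unop hX).op
        ((extZeroFreeEquiv hF M).symm (c.1 (QuotientGroup.mk 1))) = c := by
      ext t
      obtain ⟨x, rfl⟩ := QuotientGroup.mk_surjective t
      exact (extZeroSubmodule_apply_mk c x).symm
    show liftExtZeroApp hF _ X c = _
    rw [liftExtZeroApp_apply_of_eq_bot _ hX]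
    exact (NatTrans.naturality_apply α _ _).symm.trans (congrArg (α.app X) hc)
  · rw [extZeroSubmodule_eq_zero c hX]
    simp

lemma toEvalFree_liftExtZero (φ : M ⟶ (evalFree hF).obj N) :
    toEvalFree hF (liftExtZero hF φ) = φ := by
  ext m
  show liftExtZeroApp hF φ (op (free hF)) ((extZeroFreeEquiv hF M).symm m) = φ.hom m
  rw [liftExtZeroApp_apply_of_eq_bot φ rfl, toFree_free]
  simp [extZeroFreeEquiv]

variable (R G F) in
noncomputable def extZeroAdj (hF : (⊥ : Subgroup G) ∈ F) : extZero R G F ⊣ evalFree hF :=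
  Adjunction.mkOfHomEquiv
    { homEquiv _ _ :=
        ⟨toEvalFree hF, liftExtZero hF, liftExtZero_toEvalFree, toEvalFree_liftExtZero⟩
      homEquiv_naturality_left_symm {M' M N} f φ := by
        ext X c
        change extZeroSubmodule M' X.unop at c
        by_cases hX : X.unop.H = ⊥
        · show liftExtZeroApp hF _ X c = liftExtZeroApp hF φ X _
          rw [liftExtZeroApp_apply_of_eq_bot _ hX, liftExtZeroApp_apply_of_eq_bot _ hX]
          rfl
        · rw [extZeroSubmodule_eq_zero c hX]
          simp
      homEquiv_naturality_right _ _ := rfl }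

lemma extZero_preservesProjectiveObjects (hF : (⊥ : Subgroup G) ∈ F) :
    (extZero R G F).PreservesProjectiveObjects :=
  Functor.preservesProjectiveObjects_of_adjunction_of_preservesEpimorphisms (extZeroAdj R G F hF)

end Adjunction

end OrbitModule

/-- Let `G = Z/2 × Z/2`, `F = {1, H_1, H_2, H_3}` the family of
proper subgroups, `R = F_2`, `Γ = Or_F(G)`, and `R_0` the `RΓ`-module with value `R` at
`G/1` and `0` at each `G/H_i`.  Then for every `n ≥ 0`, `Ext^n_{RΓ}(R_0, R̲)` —
computed as the `n`-th cohomology of `Hom_{RΓ}(P_*, R̲)` for any projective resolution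
`P_*` of `R_0` — is isomorphic to the ordinary group cohomology `H^n(G, R)` with
coefficients in the trivial module `R`. -/
theorem ext_r0_iso_groupCohomology
    (n : ℕ) (P : ProjectiveResolution r0Mod) :
    Nonempty ((homCochain (ZMod 2) P.complex (constMod (ZMod 2) K4 k4F)).homology n
      ≅ groupCohomology (Rep.trivial (ZMod 2) K4 (ZMod 2)) n) := by
  have hF : (⊥ : Subgroup K4) ∈ k4F := bot_ne_top
  have := OrbitModule.extZero_preservesProjectiveObjects (R := ZMod 2) hF
  let S := Rep.barResolution (ZMod 2) K4
  let Q : ProjectiveResolution r0Mod :=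
    ((OrbitModule.extZero _ _ _).mapProjectiveResolution S).ofIso
      (OrbitModule.extZeroTrivialIso k4_hS_bot)
  -- the last step relies on `(evalFree hF).obj (constMod _ _ _)` being `Rep.trivial _ _ _`
  -- up to definitional unfolding
  exact ⟨(HomologicalComplex.homologyFunctor _ _ n).mapIso (homCochainIsoLinearYonedaObj _ _) ≪≫
    P.linearYonedaObjHomologyIso Q _ n ≪≫
    (HomologicalComplex.homologyFunctor _ _ n).mapIso
      ((OrbitModule.extZeroAdj _ _ _ hF).linearYonedaObjMapIso S.complex _) ≪≫
    (groupCohomologyIso _ n S).symm⟩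
end
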